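/- arXiv:1808.01214 — 6 statements merged into one kernel-verified Lean document; each statement's English description precedes it below -/
import Mathlib

section
/- Every loopless multigraph with maximum degree at most 3 admits an incidence coloring with at most 6 colors. -/
/-!
Edges with two parallel copies form, by the degree bound, components of their own, and the six
incidences of such a component receive six distinct colours. The remaining edges split into two
linear forests. Start from two subgraphs of maximum degree two (a maximal matching, extended by
Hall's theorem to meet every vertex of degree three, and its complement) and lower the number of
edges on cycles, either by moving a cycle edge to the other subgraph or by exchanging it with the
other subgraph's edge at one of its ends. By a parity argument, deleting an edge of a graph in which
all degrees are two keeps its ends connected, so no move creates a new cycle. Peeling off pendant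
edges colours the incidences of a linear forest with three colours, and the two forests get
disjoint palettes.
-/

/-- An incidence of a loopless multigraph given by `ends : E → Sym2 V` is a pair
`(v, e)` with `v` an endpoint of `e`. -/
def Incidence {V E : Type*} (ends : E → Sym2 V) : Type _ :=
  {p : V × E // p.1 ∈ ends p.2}

/-- Two distinct incidences are adjacent if they share the vertex, share the edge,
or the edge `vw` joining their vertices is one of the two edges. -/
def IncAdj {V E : Type*} (ends : E → Sym2 V) (p q : Incidence ends) : Prop :=
  p ≠ q ∧ (p.1.1 = q.1.1 ∨ p.1.2 = q.1.2 ∨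
    ends p.1.2 = s(p.1.1, q.1.1) ∨ ends q.1.2 = s(p.1.1, q.1.1))

open Finset

namespace Multigraph

variable {V E : Type*} {ends : E → Sym2 V}

theorem incAdj_iff {p q : Incidence ends} :
    IncAdj ends p q ↔ p ≠ q ∧ (q.1.1 ∈ ends p.1.2 ∨ p.1.1 ∈ ends q.1.2) := by
  obtain ⟨⟨v, e⟩, hv⟩ := p
  obtain ⟨⟨w, f⟩, hw⟩ := q
  refine and_congr_right fun _ => ⟨?_, fun h => ?_⟩
  · rintro (rfl | rfl | h | h)
    · exact Or.inl hv
    · exact Or.inl hw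
    · exact Or.inl (h ▸ Sym2.mem_mk_right v w)
    · exact Or.inr (h ▸ Sym2.mem_mk_left v w)
  · by_cases hvw : v = w
    · exact Or.inl hvw
    · refine Or.inr (Or.inr ?_)
      rcases h with h | h
      · exact Or.inl ((Sym2.mem_and_mem_iff hvw).1 ⟨hv, h⟩)
      · exact Or.inr ((Sym2.mem_and_mem_iff hvw).1 ⟨h, hw⟩)

theorem _root_.IncAdj.symm {p q : Incidence ends} (h : IncAdj ends p q) : IncAdj ends q p := by
  rw [incAdj_iff] at h ⊢
  exact ⟨h.1.symm, h.2.symm⟩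

def IsProperOn (ends : E → Sym2 V) {α : Type*} (S : Set E) (c : Incidence ends → α) : Prop :=
  ∀ p q : Incidence ends, p.1.2 ∈ S → q.1.2 ∈ S → IncAdj ends p q → c p ≠ c q

section IsProperOn

variable {α β : Type*} {S T : Set E}

theorem IsProperOn.comp {c : Incidence ends → α} (hc : IsProperOn ends S c) {g : α → β}
    (hg : Function.Injective g) : IsProperOn ends S (g ∘ c) :=
  fun p q hp hq hpq => hg.ne (hc p q hp hq hpq)

theorem IsProperOn.exists_sum {c₁ : Incidence ends → α} {c₂ : Incidence ends → β}
    (h₁ : IsProperOn ends S c₁) (h₂ : IsProperOn ends T c₂) :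
    ∃ c : Incidence ends → α ⊕ β, IsProperOn ends (S ∪ T) c := by
  classical
  refine ⟨fun p => if p.1.2 ∈ S then .inl (c₁ p) else .inr (c₂ p), 
    fun p q hp hq hpq => ?_⟩
  by_cases hpS : p.1.2 ∈ S <;> by_cases hqS : q.1.2 ∈ S <;> simp only [hpS, hqS, if_true,
    if_false, ne_eq, Sum.inl.injEq, Sum.inr.injEq, reduceCtorEq, not_false_eq_true]
  · exact h₁ p q hpS hqS hpq
  · exact h₂ p q (hp.resolve_left hpS) (hq.resolve_left hqS) hpq

theorem IsProperOn.exists_union_of_separated {c₁ c₂ : Incidence ends → α}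
    (h₁ : IsProperOn ends S c₁) (h₂ : IsProperOn ends T c₂)
    (hsep : ∀ p q : Incidence ends, p.1.2 ∈ S → q.1.2 ∉ S → IncAdj ends p q → False) :
    ∃ c : Incidence ends → α, IsProperOn ends (S ∪ T) c := by
  classical
  refine ⟨fun p => if p.1.2 ∈ S then c₁ p else c₂ p, fun p q hp hq hpq => ?_⟩
  by_cases hpS : p.1.2 ∈ S <;> by_cases hqS : q.1.2 ∈ S <;>
    simp only [hpS, hqS, if_true, if_false]
  · exact h₁ p q hpS hqS hpq
  · exact (hsep p q hpS hqS hpq).elim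
  · exact (hsep q p hqS hpS hpq.symm).elim
  · exact h₂ p q (hp.resolve_left hpS) (hq.resolve_left hqS) hpq

end IsProperOn

def Joined (ends : E → Sym2 V) (S : Finset E) : V → V → Prop :=
  Relation.ReflTransGen fun x y => ∃ e ∈ S, ends e = s(x, y)

section Joined

variable {S T : Finset E} {x y z : V}

theorem Joined.mono (hST : S ⊆ T) (h : Joined ends S x y) : Joined ends T x y :=
  Relation.ReflTransGen.mono (fun _ _ ⟨e, he, hab⟩ => ⟨e, hST he, hab⟩) _ _ h

theorem Joined.tail_of_mem (h : Joined ends S x y) {e : E} (he : e ∈ S) (hy : y ∈ ends e)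
    (hz : z ∈ ends e) : Joined ends S x z := by
  by_cases hyz : y = z
  · exact hyz ▸ h
  · exact h.tail ⟨e, he, (Sym2.mem_and_mem_iff hyz).1 ⟨hy, hz⟩⟩

theorem Joined.mem_of_closed {X : Set V}
    (hX : ∀ e ∈ S, ∀ a ∈ ends e, a ∈ X → ∀ b ∈ ends e, b ∈ X)
    (h : Joined ends S x y) (hx : x ∈ X) : y ∈ X := by
  induction h with
  | refl => exact hx
  | tail _ hstep ih =>
    obtain ⟨e, he, hbc⟩ := hstep
    exact hX e he _ (hbc ▸ Sym2.mem_mk_left _ _) ih _ (hbc ▸ Sym2.mem_mk_right _ _)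

theorem Joined.eq_of_isolated (h : Joined ends S x y) (hx : ∀ e ∈ S, x ∉ ends e) : y = x :=
  h.mem_of_closed (X := {x}) (fun e he _ ha hax => absurd (hax ▸ ha) (hx e he)) rfl

theorem Joined.exists_mem_ends (h : Joined ends S x y) (hxy : y ≠ x) :
    ∃ e ∈ S, y ∈ ends e := by
  rcases h.cases_tail with rfl | ⟨_, -, e, he, hzy⟩
  · exact absurd rfl hxy
  · exact ⟨e, he, hzy ▸ Sym2.mem_mk_right _ _⟩

end Joined

variable [DecidableEq V]

variable (ends) in
def deg (S : Finset E) (v : V) : ℕ := #{e ∈ S | v ∈ ends e}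

section deg

variable {S T : Finset E} {e f : E} {v : V}

theorem deg_mono (h : S ⊆ T) (v : V) : deg ends S v ≤ deg ends T v :=
  card_le_card (filter_subset_filter _ h)

theorem deg_pos_iff : 0 < deg ends S v ↔ ∃ e ∈ S, v ∈ ends e := by
  simp only [deg, card_pos, filter_nonempty_iff]

theorem deg_eq_zero_iff : deg ends S v = 0 ↔ ∀ e ∈ S, v ∉ ends e := by
  simp only [deg, card_eq_zero, filter_eq_empty_iff]

theorem eq_of_deg_le_one (h : deg ends S v ≤ 1) (he : e ∈ S) (hve : v ∈ ends e) (hf : f ∈ S)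
    (hvf : v ∈ ends f) : e = f :=
  card_le_one.1 h e (mem_filter.2 ⟨he, hve⟩) f (mem_filter.2 ⟨hf, hvf⟩)

theorem deg_union [DecidableEq E] (h : Disjoint S T) (v : V) :
    deg ends (S ∪ T) v = deg ends S v + deg ends T v := by
  rw [deg, filter_union, card_union_of_disjoint (disjoint_filter_filter h)]; rfl

theorem deg_union_le [DecidableEq E] (S T : Finset E) (v : V) :
    deg ends (S ∪ T) v ≤ deg ends S v + deg ends T v := by
  rw [deg, filter_union]; exact card_union_le _ _

theorem deg_insert_of_notMem [DecidableEq E] (hv : v ∉ ends e) :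
    deg ends (insert e S) v = deg ends S v := by
  rw [deg, filter_insert, if_neg hv]; rfl

theorem deg_insert_le [DecidableEq E] (S : Finset E) (e : E) (v : V) :
    deg ends (insert e S) v ≤ deg ends S v + 1 := by
  rw [deg, filter_insert]
  split
  · exact card_insert_le _ _
  · exact Nat.le_succ _

theorem deg_erase_add_one [DecidableEq E] (he : e ∈ S) (hv : v ∈ ends e) :
    deg ends (S.erase e) v + 1 = deg ends S v := by
  rw [deg, filter_erase, card_erase_add_one (mem_filter.2 ⟨he, hv⟩)]; rfl

theorem deg_erase_of_notMem [DecidableEq E] (hv : v ∉ ends e) :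
    deg ends (S.erase e) v = deg ends S v := by
  rw [deg, filter_erase, erase_eq_of_notMem (by simp [hv]), deg]

theorem deg_insert_le_of_lt [DecidableEq E] {k : ℕ} (hS : ∀ w, deg ends S w ≤ k)
    (he : ∀ w ∈ ends e, deg ends S w < k) (w : V) : deg ends (insert e S) w ≤ k := by
  by_cases hw : w ∈ ends e
  · exact (deg_insert_le S e w).trans (he w hw)
  · exact (deg_insert_of_notMem hw).trans_le (hS w)

theorem sum_deg (W : Finset V) (S : Finset E) :
    ∑ v ∈ W, deg ends S v = ∑ e ∈ S, #{v ∈ W | v ∈ ends e} := by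
  simp only [deg, card_filter]
  exact sum_comm

theorem even_sum_deg_of_closed (hl : ∀ e ∈ S, ¬(ends e).IsDiag) {W : Finset V}
    (hW : ∀ e ∈ S, ∀ a ∈ ends e, a ∈ W → ∀ b ∈ ends e, b ∈ W) :
    Even (∑ v ∈ W, deg ends S v) := by
  rw [sum_deg]
  refine even_sum _ fun e he => ?_
  by_cases hmeet : ∃ a ∈ W, a ∈ ends e
  · obtain ⟨a, haW, hae⟩ := hmeet
    have hsub : {v ∈ W | v ∈ ends e} = (ends e).toFinset := by
      ext b
      simp only [mem_filter, Sym2.mem_toFinset, and_iff_right_iff_imp]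
      exact hW e he a hae haW b
    rw [hsub, Sym2.card_toFinset_of_not_isDiag _ (hl e he)]
    exact even_two
  · push Not at hmeet
    rw [filter_false_of_mem fun a ha => hmeet a ha, card_empty]
    exact Even.zero

end deg

theorem joined_erase_of_deg_eq_two [Fintype V] [DecidableEq E] {T : Finset E} {e : E} {u v : V}
    (hl : ∀ f ∈ T, ¬(ends f).IsDiag) (hT : ∀ f ∈ T, ∀ w ∈ ends f, deg ends T w = 2)
    (he : e ∈ T) (huv : ends e = s(u, v)) : Joined ends (T.erase e) u v := by
  classical
  by_contra hcon
  set W : Finset V := {z | Joined ends (T.erase e) u z}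
  have hu : u ∈ ends e := huv ▸ Sym2.mem_mk_left u v
  have huW : u ∈ W := mem_filter.2 ⟨mem_univ u, .refl⟩
  have hdeg : ∀ z ∈ W, deg ends (T.erase e) z = if z = u then 1 else 2 := by
    intro z hz
    have hz' : Joined ends (T.erase e) u z := (mem_filter.1 hz).2
    split_ifs with hzu
    · subst hzu
      have := deg_erase_add_one he hu
      have := hT e he z hu
      omega
    · obtain ⟨g, hg, hzg⟩ := hz'.exists_mem_ends hzu
      have hze : z ∉ ends e := by
        rw [huv, Sym2.mem_iff]
        rintro (rfl | rfl)
        · exact hzu rfl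
        · exact hcon hz'
      rw [deg_erase_of_notMem hze]
      exact hT g (mem_of_mem_erase hg) z hzg
  -- the component `W` of `u` would have odd degree sum: `1` at `u` and `2` elsewhere
  have heven := even_sum_deg_of_closed (fun g hg => hl g (mem_of_mem_erase hg)) (W := W)
    fun g hg a ha haW b hb =>
      mem_filter.2 ⟨mem_univ b, (mem_filter.1 haW).2.tail_of_mem hg ha hb⟩
  rw [sum_congr rfl hdeg, ← insert_erase huW, sum_insert (notMem_erase u W), if_pos rfl,
    sum_congr rfl fun z hz => if_neg (ne_of_mem_erase hz), sum_const, smul_eq_mul] at heven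
  obtain ⟨k, hk⟩ := heven
  omega

variable (ends) in
def HasMinDegTwo (T : Finset E) : Prop :=
  ∀ e ∈ T, ∀ v ∈ ends e, 2 ≤ deg ends T v

variable (ends) in
open scoped Classical in
/-- On edge sets of maximum degree two, `core` consists of the edges lying on cycles. -/
noncomputable def core (S : Finset E) : Finset E :=
  {e ∈ S | ∃ T ⊆ S, HasMinDegTwo ends T ∧ e ∈ T}

section core

variable {S T : Finset E} {e : E} {u v : V}

theorem mem_core : e ∈ core ends S ↔ ∃ T ⊆ S, HasMinDegTwo ends T ∧ e ∈ T := by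
  simp only [core, mem_filter]
  exact ⟨fun h => h.2, fun ⟨T, hTS, hT, heT⟩ => ⟨hTS heT, T, hTS, hT, heT⟩⟩

theorem core_subset : core ends S ⊆ S := fun _ he =>
  have ⟨_, hTS, _, heT⟩ := mem_core.1 he
  hTS heT

theorem subset_core (hTS : T ⊆ S) (hT : HasMinDegTwo ends T) : T ⊆ core ends S :=
  fun _ he => mem_core.2 ⟨T, hTS, hT, he⟩

theorem core_mono (h : S ⊆ T) : core ends S ⊆ core ends T := fun _ he =>
  have ⟨U, hUS, hU, heU⟩ := mem_core.1 he
  mem_core.2 ⟨U, hUS.trans h, hU, heU⟩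

theorem hasMinDegTwo_core : HasMinDegTwo ends (core ends S) := fun e he v hv =>
  have ⟨_, hTS, hT, heT⟩ := mem_core.1 he
  (hT e heT v hv).trans (deg_mono (subset_core hTS hT) v)

theorem core_erase_subset [DecidableEq E] : core ends (S.erase e) ⊆ (core ends S).erase e :=
  fun _ hf => mem_erase.2 ⟨ne_of_mem_erase (core_subset hf), core_mono (erase_subset e S) hf⟩

theorem core_insert_subset [Fintype V] [DecidableEq E] (hl : ∀ f, ¬(ends f).IsDiag)
    (huv : ends e = s(u, v)) (hdeg : ∀ w, deg ends (insert e S) w ≤ 2)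
    (hcon : ¬Joined ends S u v) : core ends (insert e S) ⊆ core ends S := by
  intro g hg
  obtain ⟨T, hTS, hT, hgT⟩ := mem_core.1 hg
  by_cases heT : e ∈ T
  · have hT2 : ∀ f ∈ T, ∀ w ∈ ends f, deg ends T w = 2 := fun f hf w hw =>
      le_antisymm ((deg_mono hTS w).trans (hdeg w)) (hT f hf w hw)
    refine absurd ((joined_erase_of_deg_eq_two (fun f _ => hl f) hT2 heT huv).mono ?_) hcon
    exact subset_insert_iff.1 hTS
  · exact subset_core ((subset_insert_iff_of_notMem heT).1 hTS) hT hgT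

/-- In a graph of maximum degree two, the component of a cycle is that cycle. -/
theorem deg_eq_two_of_joined (hS : ∀ w, deg ends S w ≤ 2) (he : e ∈ core ends S)
    (hu : u ∈ ends e) {z : V} (h : Joined ends S u z) : deg ends S z = 2 := by
  obtain ⟨T, hTS, hT, heT⟩ := mem_core.1 he
  have hclosed : ∀ g ∈ S, ∀ a ∈ ends g, a ∈ {w | 2 ≤ deg ends T w} →
      ∀ b ∈ ends g, b ∈ {w | 2 ≤ deg ends T w} := by
    intro g hg a ha haT b hb
    have hfilter : {f ∈ T | a ∈ ends f} = {f ∈ S | a ∈ ends f} :=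
      eq_of_subset_of_card_le (filter_subset_filter _ hTS) ((hS a).trans haT)
    have hgT : g ∈ {f ∈ T | a ∈ ends f} := hfilter ▸ mem_filter.2 ⟨hg, ha⟩
    exact hT g (mem_filter.1 hgT).1 b hb
  exact le_antisymm (hS z) ((h.mem_of_closed hclosed (hT e heT u hu)).trans (deg_mono hTS z))

theorem exists_deg_le_one_of_core_eq_empty (hS : core ends S = ∅) (hne : S.Nonempty) :
    ∃ e ∈ S, ∃ v ∈ ends e, deg ends S v ≤ 1 := by
  by_contra! h
  obtain ⟨e, he⟩ := hne
  simpa [hS] using subset_core subset_rfl h he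

end core

variable (ends) in
def IsLinearForest (S : Finset E) : Prop :=
  (∀ v, deg ends S v ≤ 2) ∧ core ends S = ∅

theorem IsProperOn.exists_insert [DecidableEq E] {S : Finset E} {c : Incidence ends → Fin 3}
    (hc : IsProperOn ends S c) {e : E} (he : e ∉ S) {v w : V} (hvw : ends e = s(v, w))
    (hv : ∀ g ∈ S, v ∉ ends g) (hw : deg ends S w ≤ 1) :
    ∃ c' : Incidence ends → Fin 3, IsProperOn ends ↑(insert e S) c' := by
  -- `g` is the edge of `S` at `w`, or `e` itself if there is none
  obtain ⟨g, hwg, hg⟩ : ∃ g, w ∈ ends g ∧ ∀ f ∈ S, w ∈ ends f → f = g := by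
    by_cases h : ∃ g ∈ S, w ∈ ends g
    · obtain ⟨g, hgS, hwg⟩ := h
      exact ⟨g, hwg, fun f hf hwf => eq_of_deg_le_one hw hf hwf hgS hwg⟩
    · push Not at h
      exact ⟨e, hvw ▸ Sym2.mem_mk_right v w, fun f hf hwf => absurd hwf (h f hf)⟩
  set pw : Incidence ends := ⟨(w, g), hwg⟩
  set py : Incidence ends := ⟨(Sym2.Mem.other hwg, g), Sym2.other_mem hwg⟩
  have hpw : ∀ q : Incidence ends, q.1.2 ∈ S → q.1.1 = w → q = pw := fun q hq hqw =>
    Subtype.ext (Prod.ext hqw (hg _ hq (hqw ▸ q.2)))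
  have hcol : ∀ q : Incidence ends, q.1.2 ∈ S → w ∈ ends q.1.2 →
      c q = c pw ∨ c q = c py := by
    intro q hq hwq
    have hqg : q.1.2 = g := hg _ hq hwq
    have hq' := q.2
    rw [hqg, ← Sym2.other_spec hwg, Sym2.mem_iff] at hq'
    rcases hq' with h | h
    · exact Or.inl (by rw [hpw q hq h])
    · exact Or.inr (by rw [show q = py from Subtype.ext (Prod.ext h hqg)])
  have hfin : ∀ a b : Fin 3, ∃ x, x ≠ a ∧ x ≠ b := by decide
  obtain ⟨y₀, hy₀⟩ := hfin (c pw) (c py)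
  obtain ⟨x₀, hx₀⟩ := hfin y₀ (c pw)
  have hends : ∀ p : Incidence ends, p.1.2 = e → p.1.1 = v ∨ p.1.1 = w := fun p hp => by
    have hp' := p.2
    rwa [hp, hvw, Sym2.mem_iff] at hp'
  set c' : Incidence ends → Fin 3 := fun p =>
    if p.1.2 = e then (if p.1.1 = v then x₀ else y₀) else c p
  have key : ∀ p q : Incidence ends, p.1.2 = e → q.1.2 ∈ S → IncAdj ends p q →
      c' p ≠ c' q := by
    intro p q hp hq hpq
    have hqe : q.1.2 ≠ e := fun h => he (h ▸ hq)
    have hqv : q.1.1 ≠ v := fun h => hv _ hq (h ▸ q.2)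
    simp only [c', if_pos hp, if_neg hqe]
    rcases (incAdj_iff.1 hpq).2 with h | h
    · rw [hp, hvw, Sym2.mem_iff] at h
      rw [hpw q hq (h.resolve_left hqv)]
      split_ifs
      exacts [hx₀.2, hy₀.1]
    · have hpv : p.1.1 ≠ v := fun h' => hv _ hq (h' ▸ h)
      rw [if_neg hpv]
      rcases hcol q hq ((hends p hp).resolve_left hpv ▸ h) with h' | h' <;> rw [h']
      exacts [hy₀.1, hy₀.2]
  refine ⟨c', fun p q hp hq hpq => ?_⟩
  simp only [coe_insert, Set.mem_insert_iff, mem_coe] at hp hq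
  by_cases hpe : p.1.2 = e <;> by_cases hqe : q.1.2 = e
  · have hne : p.1.1 ≠ q.1.1 := fun h => hpq.1 (Subtype.ext (Prod.ext h (hpe.trans hqe.symm)))
    simp only [c', if_pos hpe, if_pos hqe]
    by_cases h1 : p.1.1 = v <;> by_cases h2 : q.1.1 = v <;> simp only [h1, h2, if_true, if_false]
    · exact absurd (h1.trans h2.symm) hne
    · exact hx₀.1
    · exact hx₀.1.symm
    · exact absurd (((hends p hpe).resolve_left h1).trans ((hends q hqe).resolve_left h2).symm) hne
  · exact key p q hpe (hq.resolve_left hqe) hpq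
  · exact (key q p hqe (hp.resolve_left hpe) hpq.symm).symm
  · simp only [c', if_neg hpe, if_neg hqe]
    exact hc p q (hp.resolve_left hpe) (hq.resolve_left hqe) hpq

theorem IsLinearForest.exists_isProperOn [DecidableEq E] {S : Finset E}
    (hS : IsLinearForest ends S) : ∃ c : Incidence ends → Fin 3, IsProperOn ends S c := by
  induction S using Finset.strongInduction with
  | H S ih =>
  rcases S.eq_empty_or_nonempty with rfl | hne
  · exact ⟨fun _ => 0, fun p _ hp => absurd hp (notMem_empty _)⟩
  obtain ⟨e, he, v, hv, hdeg⟩ := exists_deg_le_one_of_core_eq_empty hS.2 hne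
  have hsub := erase_subset e S
  obtain ⟨c, hc⟩ := ih _ (erase_ssubset he)
    ⟨fun x => (deg_mono hsub x).trans (hS.1 x), subset_empty.1 (hS.2 ▸ core_mono hsub)⟩
  have hv' := deg_erase_add_one he hv
  have hw' := deg_erase_add_one he (Sym2.other_mem hv)
  rw [← insert_erase he]
  refine hc.exists_insert (notMem_erase e S) (Sym2.other_spec hv).symm
    (deg_eq_zero_iff.1 (by omega)) ?_
  have := hS.1 (Sym2.Mem.other hv)
  omega

theorem exists_fin_injOn_fibers {α β : Type*} [Fintype α] [DecidableEq β] (f : α → β)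
    {k : ℕ} (hk : ∀ b, #{a | f a = b} ≤ k) :
    ∃ c : α → Fin k, ∀ a a', f a = f a' → c a = c a' → a = a' := by
  have (b : β) : Nonempty ({a // f a = b} ↪ Fin k) :=
    Function.Embedding.nonempty_of_card_le (by simpa [Fintype.card_subtype] using hk b)
  let g (b : β) := (this b).some
  refine ⟨fun a => g (f a) ⟨a, rfl⟩, fun a a' h hc => ?_⟩
  have key : ∀ b (x : {a // f a = b}), g b x = g (f x.1) ⟨x.1, rfl⟩ := by
    rintro _ ⟨x, rfl⟩
    rfl
  exact congrArg Subtype.val ((g (f a)).injective (hc.trans (key _ ⟨a', h.symm⟩).symm))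

instance [Fintype V] [Fintype E] : Fintype (Incidence ends) :=
  inferInstanceAs (Fintype {p : V × E // p.1 ∈ ends p.2})

section Parallel

variable [Fintype E]

theorem card_parallel_le (hdeg : ∀ v, deg ends univ v ≤ 3) (z : Sym2 V) :
    #{e | ends e = z} ≤ 3 := by
  obtain ⟨u, hu⟩ : ∃ u, u ∈ z := ⟨_, Sym2.out_fst_mem z⟩
  refine (card_le_card fun e he => ?_).trans (hdeg u)
  simp only [mem_filter, mem_univ, true_and] at he ⊢
  exact he ▸ hu

theorem card_incidences_parallel_le [Fintype V] (hdeg : ∀ v, deg ends univ v ≤ 3) (z : Sym2 V) :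
    #{p : Incidence ends | ends p.1.2 = z} ≤ 6 :=
  calc #{p : Incidence ends | ends p.1.2 = z}
      _ ≤ #(({e | ends e = z} : Finset E) ×ˢ z.toFinset) := by
        refine card_le_card_of_injOn (fun p => (p.1.2, p.1.1)) (fun p hp => ?_)
          fun p _ q _ h => Subtype.ext (Prod.ext (congrArg Prod.snd h) (congrArg Prod.fst h))
        simp only [coe_filter, mem_univ, true_and, coe_product] at hp ⊢
        exact ⟨hp, Sym2.mem_toFinset.2 (hp ▸ p.2)⟩
      _ ≤ 3 * 2 := by
        rw [card_product, Sym2.card_toFinset]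
        exact Nat.mul_le_mul (card_parallel_le hdeg z) (by split <;> omega)

theorem ends_eq_of_two_lt_card_parallel (hdeg : ∀ v, deg ends univ v ≤ 3) {e g : E}
    (he : 2 < #{f | ends f = ends e}) {v : V} (hve : v ∈ ends e) (hvg : v ∈ ends g) :
    ends g = ends e := by
  have hsub : ({f | ends f = ends e} : Finset E) ⊆ ({f | v ∈ ends f} : Finset E) :=
      fun f hf => by
    simp only [mem_filter, mem_univ, true_and] at hf ⊢
    exact hf ▸ hve
  have heq := eq_of_subset_of_card_le hsub ((hdeg v).trans he)
  have hg : g ∈ ({f | v ∈ ends f} : Finset E) := by simpa using hvg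
  rw [← heq] at hg
  simpa using hg

theorem ends_eq_of_incAdj (hdeg : ∀ v, deg ends univ v ≤ 3) {p q : Incidence ends}
    (hp : 2 < #{f | ends f = ends p.1.2}) (h : IncAdj ends p q) : ends q.1.2 = ends p.1.2 := by
  rcases (incAdj_iff.1 h).2 with h | h
  · exact ends_eq_of_two_lt_card_parallel hdeg hp h q.2
  · exact ends_eq_of_two_lt_card_parallel hdeg hp p.2 h

theorem exists_isProperOn_two_lt_card_parallel [Fintype V] (hdeg : ∀ v, deg ends univ v ≤ 3) :
    ∃ c : Incidence ends → Fin 6, IsProperOn ends {e | 2 < #{f | ends f = ends e}} c := by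
  obtain ⟨c, hc⟩ := exists_fin_injOn_fibers (fun p : Incidence ends => ends p.1.2)
    (card_incidences_parallel_le hdeg)
  exact ⟨c, fun p q hp _ hpq hcpq =>
    hpq.1 (hc q p (ends_eq_of_incAdj hdeg hp hpq) hcpq.symm).symm⟩

end Parallel

section Decomposition

variable [DecidableEq E]

theorem exists_maximal_matching (D : Finset E) :
    ∃ M ⊆ D, (∀ v, deg ends M v ≤ 1) ∧
      ∀ e ∈ D, ∃ w ∈ ends e, 0 < deg ends M w := by
  classical
  obtain ⟨M, hM, hmax⟩ := exists_max_image {M ∈ D.powerset | ∀ v, deg ends M v ≤ 1} card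
    ⟨∅, mem_filter.2 ⟨empty_mem_powerset D, fun v => by simp [deg]⟩⟩
  obtain ⟨hMD, hM1⟩ := mem_filter.1 hM
  refine ⟨M, mem_powerset.1 hMD, hM1, fun e he => ?_⟩
  by_contra! hfree
  obtain ⟨u, hu⟩ : ∃ u, u ∈ ends e := ⟨_, Sym2.out_fst_mem _⟩
  have heM : e ∉ M := fun h => (hfree u hu).not_gt (deg_pos_iff.2 ⟨e, h, hu⟩)
  have := hmax (insert e M) (mem_filter.2 ⟨mem_powerset.2 (insert_subset he (mem_powerset.1 hMD)),
    deg_insert_le_of_lt hM1 fun w hw => (hfree w hw).trans_lt one_pos⟩)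
  rw [card_insert_of_notMem heM] at this
  omega

/-- Hall's theorem gives every unmatched vertex of degree three a private matched neighbour. -/
theorem exists_private_edges [Fintype V] {D M : Finset E} (hD : ∀ v, deg ends D v ≤ 3)
    (hM : ∀ e ∈ D, ∃ w ∈ ends e, 0 < deg ends M w) :
    ∃ P ⊆ D, (∀ v, deg ends P v ≤ 1) ∧
      ∀ v, deg ends D v = 3 → deg ends M v = 0 → 0 < deg ends P v := by
  classical
  set U : Finset V := {v | deg ends D v = 3 ∧ deg ends M v = 0}
  set N : V → Finset V := fun v => {w | ∃ e ∈ D, ends e = s(v, w)}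
  have hall : ∀ s : Finset U, #s ≤ #(s.biUnion fun x => N x) := by
    intro s
    set sv := s.map (Function.Embedding.subtype _)
    set Ns := s.biUnion fun x => N x
    have hsv : ∀ v ∈ sv, deg ends D v = 3 ∧ deg ends M v = 0 := by
      intro v hv
      obtain ⟨x, -, rfl⟩ := mem_map.1 hv
      exact (mem_filter.1 x.2).2
    have hedge : ∀ e ∈ D, #{v ∈ sv | v ∈ ends e} ≤ #{w ∈ Ns | w ∈ ends e} := by
      intro e he
      rcases eq_empty_or_nonempty {v ∈ sv | v ∈ ends e} with h | ⟨v, hv⟩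
      · simp [h]
      obtain ⟨hvs, hve⟩ := mem_filter.1 hv
      -- the edge `e` has a matched end, so it meets `sv` at most once
      have hle : #{v ∈ sv | v ∈ ends e} ≤ 1 := card_le_one.2 fun a ha b hb => by
        by_contra hab
        obtain ⟨w, hw, hwM⟩ := hM e he
        rw [(Sym2.mem_and_mem_iff hab).1 ⟨(mem_filter.1 ha).2, (mem_filter.1 hb).2⟩,
          Sym2.mem_iff] at hw
        rcases hw with rfl | rfl
        · exact hwM.ne' (hsv _ (mem_filter.1 ha).1).2
        · exact hwM.ne' (hsv _ (mem_filter.1 hb).1).2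
      refine hle.trans
        (card_pos.2 ⟨Sym2.Mem.other hve, mem_filter.2 ⟨?_, Sym2.other_mem hve⟩⟩)
      obtain ⟨x, hx, rfl⟩ := mem_map.1 hvs
      exact mem_biUnion.2
        ⟨x, hx, mem_filter.2 ⟨mem_univ _, e, he, (Sym2.other_spec hve).symm⟩⟩
    have := calc #s * 3
        _ = ∑ v ∈ sv, deg ends D v := by
          rw [sum_congr rfl fun v hv => (hsv v hv).1, sum_const, card_map, smul_eq_mul]
        _ ≤ ∑ w ∈ Ns, deg ends D w := by
          rw [sum_deg, sum_deg]
          exact sum_le_sum hedge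
        _ ≤ #Ns * 3 := by
          rw [← smul_eq_mul, ← sum_const]
          exact sum_le_sum fun w _ => hD w
    omega
  obtain ⟨φ, hφ, hφN⟩ := (all_card_le_biUnion_card_iff_exists_injective _).1 hall
  choose pk hpkD hpk using fun x : U => (mem_filter.1 (hφN x)).2
  have hunm : ∀ x : U, deg ends M x = 0 := fun x => (mem_filter.1 x.2).2.2
  have hmatched : ∀ x : U, 0 < deg ends M (φ x) := by
    intro x
    obtain ⟨w, hw, hwM⟩ := hM _ (hpkD x)
    rw [hpk, Sym2.mem_iff] at hw
    rcases hw with rfl | rfl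
    · exact absurd (hunm x) hwM.ne'
    · exact hwM
  refine ⟨univ.image pk, image_subset_iff.2 fun x _ => hpkD x, fun z => ?_, fun v hv h0 => ?_⟩
  · refine card_le_one.2 fun g₁ h₁ g₂ h₂ => ?_
    obtain ⟨hg₁, hz₁⟩ := mem_filter.1 h₁
    obtain ⟨hg₂, hz₂⟩ := mem_filter.1 h₂
    obtain ⟨x₁, -, rfl⟩ := mem_image.1 hg₁
    obtain ⟨x₂, -, rfl⟩ := mem_image.1 hg₂
    rw [hpk, Sym2.mem_iff] at hz₁ hz₂
    suffices x₁ = x₂ by rw [this]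
    rcases hz₁ with rfl | rfl <;> rcases hz₂ with h | h
    · exact Subtype.ext h
    · exact absurd (h ▸ hunm x₁) (hmatched x₂).ne'
    · exact absurd (h ▸ hunm x₂) (hmatched x₁).ne'
    · exact hφ h
  · have hvU : v ∈ U := mem_filter.2 ⟨mem_univ v, hv, h0⟩
    exact deg_pos_iff.2 ⟨pk ⟨v, hvU⟩, mem_image_of_mem _ (mem_univ _),
      hpk ⟨v, hvU⟩ ▸ Sym2.mem_mk_left _ _⟩

theorem exists_cover_deg_le_two [Fintype V] {D : Finset E} (hD : ∀ v, deg ends D v ≤ 3) :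
    ∃ B ⊆ D, (∀ v, deg ends B v ≤ 2) ∧ ∀ v, deg ends D v = 3 → 0 < deg ends B v := by
  obtain ⟨M, hMD, hM1, hMcov⟩ := exists_maximal_matching (ends := ends) D
  obtain ⟨P, hPD, hP1, hPcov⟩ := exists_private_edges hD hMcov
  refine ⟨M ∪ P, union_subset hMD hPD, fun v => (deg_union_le M P v).trans ?_, fun v hv => ?_⟩
  · linarith [hM1 v, hP1 v]
  rcases (deg ends M v).eq_zero_or_pos with h0 | hpos
  · exact (hPcov v hv h0).trans_le (deg_mono subset_union_right v)
  · exact hpos.trans_le (deg_mono subset_union_left v)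

variable (ends) in
structure IsSplit (D A B : Finset E) : Prop where
  disjoint : Disjoint A B
  union_eq : A ∪ B = D
  deg_left_le : ∀ v, deg ends A v ≤ 2
  deg_right_le : ∀ v, deg ends B v ≤ 2

variable (ends) in
noncomputable def coreWeight (A B : Finset E) : ℕ :=
  #(core ends A) + #(core ends B)

section Split

variable {D A B : Finset E}

theorem exists_isSplit [Fintype V] (hD : ∀ v, deg ends D v ≤ 3) :
    ∃ A B, IsSplit ends D A B := by
  obtain ⟨B, hBD, hB2, hBcov⟩ := exists_cover_deg_le_two hD
  refine ⟨D \ B, B, ⟨sdiff_disjoint, sdiff_union_of_subset hBD, fun v => ?_, hB2⟩⟩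
  have h := deg_union (ends := ends) (sdiff_disjoint (s := B) (t := D)) v
  rw [sdiff_union_of_subset hBD] at h
  rcases (hD v).lt_or_eq with hlt | heq
  · omega
  · have := hBcov v heq
    omega

theorem IsSplit.symm (hs : IsSplit ends D A B) : IsSplit ends D B A :=
  ⟨hs.disjoint.symm, union_comm B A ▸ hs.union_eq, hs.deg_right_le, hs.deg_left_le⟩

theorem IsSplit.deg_add (hs : IsSplit ends D A B) (v : V) :
    deg ends A v + deg ends B v = deg ends D v := by
  rw [← deg_union hs.disjoint, hs.union_eq]

theorem IsSplit.deg_right_le_one (hs : IsSplit ends D A B) (hD : ∀ v, deg ends D v ≤ 3) {e : E}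
    (he : e ∈ core ends A) {v : V} (hv : v ∈ ends e) : deg ends B v ≤ 1 := by
  have := deg_eq_two_of_joined hs.deg_left_le he hv .refl
  have := hs.deg_add v
  have := hD v
  omega

theorem coreWeight_lt {A' B' : Finset E} {e : E} (he : e ∈ core ends A)
    (hA : core ends A' ⊆ core ends (A.erase e)) (hB : core ends B' ⊆ core ends B) :
    coreWeight ends A' B' < coreWeight ends A B := by
  have hA' := card_le_card (hA.trans core_erase_subset)
  have hB' := card_le_card hB
  rw [card_erase_of_mem he] at hA'
  have := card_pos.2 ⟨e, he⟩
  unfold coreWeight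
  omega

theorem IsSplit.exists_lt_coreWeight_of_not_joined [Fintype V] (hl : ∀ e, ¬(ends e).IsDiag)
    (hD : ∀ v, deg ends D v ≤ 3) (hs : IsSplit ends D A B) {e : E}
    (he : e ∈ core ends A) {a b : V} (hab : ends e = s(a, b)) (hcon : ¬Joined ends B a b) :
    ∃ A' B', IsSplit ends D A' B' ∧ coreWeight ends A' B' < coreWeight ends A B := by
  have heA := core_subset he
  have hB' := deg_insert_le_of_lt hs.deg_right_le fun w hw =>
    (hs.deg_right_le_one hD he hw).trans_lt one_lt_two
  refine ⟨A.erase e, insert e B, ⟨?_, ?_, fun w => (deg_mono (erase_subset e A) w).trans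
    (hs.deg_left_le w), hB'⟩, coreWeight_lt he subset_rfl (core_insert_subset hl hab hB' hcon)⟩
  · have := hs.disjoint
    grind [disjoint_left]
  · have := hs.union_eq
    grind

theorem IsSplit.exists_lt_coreWeight_of_swap [Fintype V] (hl : ∀ e, ¬(ends e).IsDiag)
    (hD : ∀ v, deg ends D v ≤ 3) (hs : IsSplit ends D A B) {e : E} (he : e ∈ core ends A)
    {u v : V} (huv : ends e = s(u, v)) {f : E} (hf : f ∈ B) {x : V} (hux : ends f = s(u, x))
    (hxv : x ≠ v) (huf : ∀ g ∈ B, u ∈ ends g → g = f) (hjoin : Joined ends B u v) :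
    ∃ A' B', IsSplit ends D A' B' ∧ coreWeight ends A' B' < coreWeight ends A B := by
  have heA := core_subset he
  have hu : u ∈ ends e := huv ▸ Sym2.mem_mk_left u v
  have hv : v ∈ ends e := huv ▸ Sym2.mem_mk_right u v
  have hfu : u ∈ ends f := hux ▸ Sym2.mem_mk_left u x
  have hAu := deg_eq_two_of_joined hs.deg_left_le he hu .refl
  have hBu := hs.deg_right_le_one hD he hu
  have hBv := hs.deg_right_le_one hD he hv
  have huv' : u ≠ v := fun h => hl e (huv ▸ Sym2.mk_isDiag_iff.2 h)
  -- `x` is an inner vertex of the `B`-path from `u` to `v`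
  have hBx : deg ends B x = 2 := by
    refine le_antisymm (hs.deg_right_le x) (not_lt.1 fun hlt => ?_)
    have hclosed : ∀ g ∈ B, ∀ a ∈ ends g, a ∈ ({u, x} : Set V) →
        ∀ b ∈ ends g, b ∈ ({u, x} : Set V) := by
      intro g hg a ha haux b hb
      have hgf : g = f := by
        rcases haux with rfl | rfl
        · exact huf g hg ha
        · exact eq_of_deg_le_one (by omega) hg ha hf (hux ▸ Sym2.mem_mk_right _ _)
      rwa [hgf, hux, Sym2.mem_iff] at hb
    rcases hjoin.mem_of_closed hclosed (Or.inl rfl) with h | h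
    · exact huv' h.symm
    · exact hxv h.symm
  have hAx : deg ends A x ≤ 1 := by
    have := hs.deg_add x
    have := hD x
    omega
  have hA' : ∀ w, deg ends (insert f (A.erase e)) w ≤ 2 := by
    refine deg_insert_le_of_lt (fun w => (deg_mono (erase_subset e A) w).trans
      (hs.deg_left_le w)) fun w hw => ?_
    rw [hux, Sym2.mem_iff] at hw
    rcases hw with rfl | rfl
    · have := deg_erase_add_one heA hu
      omega
    · have := deg_mono (ends := ends) (erase_subset e A) w
      omega
  have hB' : ∀ w, deg ends (insert e (B.erase f)) w ≤ 2 := by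
    refine deg_insert_le_of_lt (fun w => (deg_mono (erase_subset f B) w).trans
      (hs.deg_right_le w)) fun w hw => ?_
    rw [huv, Sym2.mem_iff] at hw
    rcases hw with rfl | rfl
    · have := deg_erase_add_one hf hfu
      omega
    · have := deg_mono (ends := ends) (erase_subset f B) w
      omega
  have hAux : ¬Joined ends (A.erase e) u x := fun h => by
    have := deg_eq_two_of_joined hs.deg_left_le he hu (h.mono (erase_subset e A))
    omega
  have hBuv : ¬Joined ends (B.erase f) u v := fun h => huv' <| Eq.symm <|
    h.eq_of_isolated fun g hg hug => ne_of_mem_erase hg (huf g (mem_of_mem_erase hg) hug)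
  refine ⟨insert f (A.erase e), insert e (B.erase f), ⟨?_, ?_, hA', hB'⟩, coreWeight_lt he
    (core_insert_subset hl hux hA' hAux)
    ((core_insert_subset hl huv hB' hBuv).trans (core_mono (erase_subset f B)))⟩
  · have := hs.disjoint
    grind [disjoint_left]
  · have := hs.union_eq
    grind

theorem IsSplit.exists_core_edge_ne (hs : IsSplit ends D A B)
    (hpar : ∀ e ∈ D, #{f ∈ D | ends f = ends e} ≤ 2) {e₀ : E}
    (he₀ : e₀ ∈ core ends A) {u : V} (hu : u ∈ ends e₀) {f : E} (hf : f ∈ B) {x : V}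
    (hux : ends f = s(u, x)) :
    ∃ e ∈ core ends A, ∃ v, ends e = s(u, v) ∧ v ≠ x := by
  obtain ⟨e₁, h₁, e₂, h₂, h12⟩ := one_lt_card.1 (hasMinDegTwo_core e₀ he₀ u hu)
  rw [mem_filter] at h₁ h₂
  by_contra! hall
  have hmem : ∀ e ∈ core ends A, u ∈ ends e → e ∈ {g ∈ D | ends g = ends f} :=
    fun e he hue => mem_filter.2 ⟨hs.union_eq ▸ mem_union_left B (core_subset he), by
      rw [← Sym2.other_spec hue, hall e he _ (Sym2.other_spec hue).symm, hux]⟩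
  have hne : ∀ e ∈ core ends A, e ≠ f := fun e he h =>
    disjoint_left.1 hs.disjoint (core_subset he) (h ▸ hf)
  have hfD : f ∈ D := hs.union_eq ▸ mem_union_right A hf
  exact (hpar f hfD).not_gt (two_lt_card.2 ⟨e₁, hmem e₁ h₁.1 h₁.2, e₂, hmem e₂ h₂.1 h₂.2,
    f, mem_filter.2 ⟨hfD, rfl⟩, h12, hne e₁ h₁.1, hne e₂ h₂.1⟩)

theorem IsSplit.exists_lt_coreWeight [Fintype V] (hl : ∀ e, ¬(ends e).IsDiag)
    (hD : ∀ v, deg ends D v ≤ 3) (hs : IsSplit ends D A B)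
    (hpar : ∀ e ∈ D, #{f ∈ D | ends f = ends e} ≤ 2) (hne : (core ends A).Nonempty) :
    ∃ A' B', IsSplit ends D A' B' ∧ coreWeight ends A' B' < coreWeight ends A B := by
  obtain ⟨e₀, he₀⟩ := hne
  obtain ⟨u, hu⟩ : ∃ u, u ∈ ends e₀ := ⟨_, Sym2.out_fst_mem _⟩
  by_cases hBu : ∃ f ∈ B, u ∈ ends f
  · obtain ⟨f, hf, hfu⟩ := hBu
    have huf : ∀ g ∈ B, u ∈ ends g → g = f := fun g hg hug =>
      eq_of_deg_le_one (hs.deg_right_le_one hD he₀ hu) hg hug hf hfu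
    have hux := (Sym2.other_spec hfu).symm
    obtain ⟨e, he, v, huv, hxv⟩ := hs.exists_core_edge_ne hpar he₀ hu hf hux
    by_cases hj : Joined ends B u v
    · exact hs.exists_lt_coreWeight_of_swap hl hD he huv hf hux hxv.symm huf hj
    · exact hs.exists_lt_coreWeight_of_not_joined hl hD he huv hj
  · push Not at hBu
    refine hs.exists_lt_coreWeight_of_not_joined hl hD he₀ (Sym2.other_spec hu).symm
      fun h => hl e₀ ?_
    rw [← Sym2.other_spec hu, Sym2.mk_isDiag_iff]
    exact (h.eq_of_isolated hBu).symm

theorem exists_linearForest_decomposition [Fintype E] [Fintype V] (hl : ∀ e, ¬(ends e).IsDiag)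
    (hD : ∀ v, deg ends D v ≤ 3) (hpar : ∀ e ∈ D, #{f ∈ D | ends f = ends e} ≤ 2) :
    ∃ A B, A ∪ B = D ∧ IsLinearForest ends A ∧ IsLinearForest ends B := by
  classical
  obtain ⟨A₀, B₀, hs₀⟩ := exists_isSplit hD
  obtain ⟨⟨A, B⟩, hmem, hmin⟩ := exists_min_image
    {p : Finset E × Finset E | IsSplit ends D p.1 p.2} (fun p => coreWeight ends p.1 p.2)
    ⟨(A₀, B₀), by simpa using hs₀⟩
  simp only [mem_filter, mem_univ, true_and, Prod.forall] at hmem hmin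
  refine ⟨A, B, hmem.union_eq, ⟨hmem.deg_left_le, ?_⟩, ⟨hmem.deg_right_le, ?_⟩⟩
  · by_contra h
    obtain ⟨A', B', hs', hlt⟩ :=
      hmem.exists_lt_coreWeight hl hD hpar (nonempty_iff_ne_empty.2 h)
    exact (hmin A' B' hs').not_gt hlt
  · by_contra h
    obtain ⟨B', A', hs', hlt⟩ :=
      hmem.symm.exists_lt_coreWeight hl hD hpar (nonempty_iff_ne_empty.2 h)
    unfold coreWeight at hlt
    exact (hmin A' B' hs'.symm).not_gt (by unfold coreWeight; omega)

end Split

end Decomposition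

end Multigraph

open Multigraph Finset in
theorem cubic_multigraph_incidence_six_colorable
    {V E : Type*} [Fintype V] [Fintype E] [DecidableEq V]
    (ends : E → Sym2 V)
    (hloopless : ∀ e, ¬ (ends e).IsDiag)
    (hdeg : ∀ v : V, (Finset.univ.filter fun e : E => v ∈ ends e).card ≤ 3) :
    ∃ c : Incidence ends → Fin 6,
      ∀ p q : Incidence ends, IncAdj ends p q → c p ≠ c q := by
  classical
  -- the edges outside `D` come in isolated triples of parallel edges
  set D : Finset E := {e | #{f | ends f = ends e} ≤ 2}
  have hD : ∀ v, deg ends D v ≤ 3 := fun v => (deg_mono (subset_univ D) v).trans (hdeg v)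
  have hpar : ∀ e ∈ D, #{f ∈ D | ends f = ends e} ≤ 2 := fun e he =>
    (card_le_card (filter_subset_filter _ (subset_univ D))).trans (mem_filter.1 he).2
  obtain ⟨A, B, hAB, hA, hB⟩ := exists_linearForest_decomposition hloopless hD hpar
  obtain ⟨cA, hcA⟩ := hA.exists_isProperOn
  obtain ⟨cB, hcB⟩ := hB.exists_isProperOn
  obtain ⟨c₁, hc₁⟩ := hcA.exists_sum hcB
  rw [← coe_union, hAB] at hc₁
  obtain ⟨c₂, hc₂⟩ := exists_isProperOn_two_lt_card_parallel hdeg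
  have hsep : ∀ p q : Incidence ends, p.1.2 ∈ (D : Set E) → q.1.2 ∉ (D : Set E) →
      IncAdj ends p q → False := fun p q hp hq hpq => by
    simp only [D, coe_filter, mem_univ, true_and, Set.mem_ofPred_eq, not_le] at hp hq
    rw [ends_eq_of_incAdj hdeg hq hpq.symm] at hp
    omega
  obtain ⟨c, hc⟩ := (hc₁.comp finSumFinEquiv.injective).exists_union_of_separated hc₂ hsep
  refine ⟨c, fun p q hpq => hc p q ?_ ?_ hpq⟩ <;>
    simp only [D, coe_filter, mem_univ, true_and, Set.mem_union, Set.mem_ofPred_eq] <;> omega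
end

section
/- Let G be the graph on 7 vertices u,v,w,x,y,z,t consisting of the path u–v–w–x–y together with edges vz and xt. Suppose lists of colors are assigned to its edges with |L(uv)|, |L(vw)|, |L(wx)|, |L(xy)| ≥ 5 and |L(vz)|, |L(xt)| ≥ 3, where all strong-coloring constraints among these 6 edges come from the graph structure. Then one can choose colors for uv, vz, xy, xt from their lists forming a partial strong edge-coloring such that, after removing the chosen colors of coloring-conflicting edges from the lists of vw and wx, at least 3 colors remain available for vw and at least 2 colors remain available for wx. -/
/-!
Shrink `L(vw)` and `L(wx)` to five-colour sublists `A` and `B`: it suffices that the four chosen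
colours meet `A` in at most two colours and `B` in at most three.

If `L(vz)` and `L(xt)` share a colour `c`, use it on both pendant edges; then at most three colours
are used, and since `L(uv) ∖ {c}` and `L(xy) ∖ {c}` have four colours each, they either share a
colour or one of them leaves `A`. Otherwise `L(vz)` and `L(xt)` cannot both lie in `A`. If
neither does, give both pendant edges colours outside `A`; then `L(uv)` and `L(xy)` minus these
colours either share a colour or one of them leaves `B`. If `L(vz) ⊆ A` and `b ∈ L(xt) ∖ A`,
colour `xt` with `b`: either some colour serves both `vz` and `xy`, or `L(xy)` has two colours
outside `A`; then `uv` gets a colour outside `B`, or `L(uv) = B` and `uv` repeats the colour of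
`xy`.
-/

open Finset

namespace Config1

variable {α : Type*} [DecidableEq α]

def Precolorable (Luv Lvz Lxy Lxt A B : Finset α) : Prop :=
  ∃ cuv ∈ Luv, ∃ cvz ∈ Lvz, ∃ cxy ∈ Lxy, ∃ cxt ∈ Lxt,
    cuv ≠ cvz ∧ cxy ≠ cxt ∧
    #({cuv, cvz, cxy, cxt} ∩ A) ≤ 2 ∧ #({cuv, cvz, cxy, cxt} ∩ B) ≤ 3

variable {Luv Lvz Lxy Lxt A B : Finset α}

theorem Precolorable.of_subset {cuv cvz cxy cxt x y p q r : α}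
    (huv : cuv ∈ Luv) (hvz : cvz ∈ Lvz) (hxy : cxy ∈ Lxy) (hxt : cxt ∈ Lxt)
    (hv : cuv ≠ cvz) (hx : cxy ≠ cxt)
    (hA : {cuv, cvz, cxy, cxt} ∩ A ⊆ {x, y}) (hB : {cuv, cvz, cxy, cxt} ∩ B ⊆ {p, q, r}) :
    Precolorable Luv Lvz Lxy Lxt A B :=
  ⟨cuv, huv, cvz, hvz, cxy, hxy, cxt, hxt, hv, hx,
    (card_le_card hA).trans card_le_two, (card_le_card hB).trans card_le_three⟩

theorem Precolorable.symm (h : Precolorable Lxy Lxt Luv Lvz A B) :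
    Precolorable Luv Lvz Lxy Lxt A B := by
  obtain ⟨cxy, hxy, cxt, hxt, cuv, huv, cvz, hvz, hx, hv, hA, hB⟩ := h
  have hS : ({cxy, cxt, cuv, cvz} : Finset α) = {cuv, cvz, cxy, cxt} := by grind
  exact ⟨cuv, huv, cvz, hvz, cxy, hxy, cxt, hxt, hv, hx, hS ▸ hA, hS ▸ hB⟩

theorem precolorable_of_mem_inter {c : α} (hc : c ∈ Lvz ∩ Lxt) (hA : #A ≤ 5)
    (huv : 5 ≤ #Luv) (hxy : 5 ≤ #Lxy) : Precolorable Luv Lvz Lxy Lxt A B := by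
  obtain ⟨hcvz, hcxt⟩ := mem_inter.mp hc
  by_cases hu : Luv.erase c ⊆ A
  · by_cases hx : Lxy.erase c ⊆ A
    · have := pred_card_le_card_erase (s := Luv) (a := c)
      have := pred_card_le_card_erase (s := Lxy) (a := c)
      obtain ⟨d, hd⟩ := inter_nonempty_of_card_lt_card_add_card hu hx (by omega)
      obtain ⟨hduv, hdxy⟩ := mem_inter.mp hd
      exact .of_subset (mem_of_mem_erase hduv) hcvz (mem_of_mem_erase hdxy) hcxt
        (ne_of_mem_erase hduv) (ne_of_mem_erase hdxy)
        (by grind : _ ⊆ ({d, c} : Finset α)) (by grind : _ ⊆ ({d, c, c} : Finset α))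
    · obtain ⟨e, he, heA⟩ := not_subset.mp hx
      obtain ⟨cuv, hcuv, hcuvc⟩ := exists_mem_ne (by omega : 1 < #Luv) c
      exact .of_subset hcuv hcvz (mem_of_mem_erase he) hcxt hcuvc (ne_of_mem_erase he)
        (by grind : _ ⊆ ({cuv, c} : Finset α)) (by grind : _ ⊆ ({cuv, c, e} : Finset α))
  · obtain ⟨e, he, heA⟩ := not_subset.mp hu
    obtain ⟨cxy, hcxy, hcxyc⟩ := exists_mem_ne (by omega : 1 < #Lxy) c
    exact .of_subset (mem_of_mem_erase he) hcvz hcxy hcxt (ne_of_mem_erase he) hcxyc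
      (by grind : _ ⊆ ({c, cxy} : Finset α)) (by grind : _ ⊆ ({e, c, cxy} : Finset α))

theorem precolorable_of_notMem {a b : α} (ha : a ∈ Lvz) (haA : a ∉ A) (hb : b ∈ Lxt)
    (hbA : b ∉ A) (hB : #B ≤ 5) (huv : 5 ≤ #Luv) (hxy : 5 ≤ #Lxy) :
    Precolorable Luv Lvz Lxy Lxt A B := by
  by_cases hu : Luv.erase a ⊆ B
  · by_cases hx : Lxy.erase b ⊆ B
    · have := pred_card_le_card_erase (s := Luv) (a := a)
      have := pred_card_le_card_erase (s := Lxy) (a := b)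
      obtain ⟨c, hc⟩ := inter_nonempty_of_card_lt_card_add_card hu hx (by omega)
      obtain ⟨hcuv, hcxy⟩ := mem_inter.mp hc
      exact .of_subset (mem_of_mem_erase hcuv) ha (mem_of_mem_erase hcxy) hb
        (ne_of_mem_erase hcuv) (ne_of_mem_erase hcxy)
        (by grind : _ ⊆ ({c, c} : Finset α)) (by grind : _ ⊆ ({c, a, b} : Finset α))
    · obtain ⟨e, he, heB⟩ := not_subset.mp hx
      obtain ⟨cuv, hcuv, hcuva⟩ := exists_mem_ne (by omega : 1 < #Luv) a
      exact .of_subset hcuv ha (mem_of_mem_erase he) hb hcuva (ne_of_mem_erase he)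
        (by grind : _ ⊆ ({cuv, e} : Finset α)) (by grind : _ ⊆ ({cuv, a, b} : Finset α))
  · obtain ⟨e, he, heB⟩ := not_subset.mp hu
    obtain ⟨cxy, hcxy, hcxyb⟩ := exists_mem_ne (by omega : 1 < #Lxy) b
    exact .of_subset (mem_of_mem_erase he) ha hcxy hb (ne_of_mem_erase he) hcxyb
      (by grind : _ ⊆ ({e, cxy} : Finset α)) (by grind : _ ⊆ ({a, cxy, b} : Finset α))

theorem precolorable_of_subset {b : α} (hvzA : Lvz ⊆ A) (hb : b ∈ Lxt) (hbA : b ∉ A)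
    (hA : #A ≤ 5) (hB : #B ≤ 5) (huv : 5 ≤ #Luv) (hvz : 3 ≤ #Lvz) (hxy : 5 ≤ #Lxy) :
    Precolorable Luv Lvz Lxy Lxt A B := by
  by_cases hvzxy : (Lvz ∩ Lxy).Nonempty
  · obtain ⟨p, hp⟩ := hvzxy
    obtain ⟨hpvz, hpxy⟩ := mem_inter.mp hp
    obtain ⟨cuv, hcuv, hcuvp⟩ := exists_mem_ne (by omega : 1 < #Luv) p
    exact .of_subset hcuv hpvz hpxy hb hcuvp (by grind)
      (by grind : _ ⊆ ({cuv, p} : Finset α)) (by grind : _ ⊆ ({cuv, p, b} : Finset α))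
  have hdisj : Disjoint Lvz Lxy :=
    disjoint_iff_inter_eq_empty.mpr (not_nonempty_iff_eq_empty.mp hvzxy)
  -- `L(vz)` fills all but two colours of `A`, so `L(xy)` has two colours outside `A`.
  obtain ⟨x, hx, hxbA⟩ := exists_mem_notMem_of_card_lt_card (s := insert b A) (t := Lvz ∪ Lxy)
    (by rw [card_union_of_disjoint hdisj]; grind [card_insert_le])
  have hxxy : x ∈ Lxy := by grind
  obtain ⟨p, hp⟩ : Lvz.Nonempty := card_pos.mp (by omega)
  by_cases huvB : Luv ⊆ B
  · have huvB' : Luv = B := eq_of_subset_of_card_le huvB (by omega)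
    by_cases hxB : x ∈ B
    · exact .of_subset (huvB' ▸ hxB) hp hxxy hb (by grind) (by grind)
        (by grind : _ ⊆ ({p, p} : Finset α)) (by grind : _ ⊆ ({x, p, b} : Finset α))
    · obtain ⟨cuv, hcuv, hcuvp⟩ := exists_mem_ne (by omega : 1 < #Luv) p
      exact .of_subset hcuv hp hxxy hb hcuvp (by grind)
        (by grind : _ ⊆ ({cuv, p} : Finset α)) (by grind : _ ⊆ ({cuv, p, b} : Finset α))
  · obtain ⟨u, hu, huB⟩ := not_subset.mp huvB
    obtain ⟨cvz, hcvz, hcvzu⟩ := exists_mem_ne (by omega : 1 < #Lvz) u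
    exact .of_subset hu hcvz hxxy hb hcvzu.symm (by grind)
      (by grind : _ ⊆ ({u, cvz} : Finset α)) (by grind : _ ⊆ ({cvz, x, b} : Finset α))

theorem precolorable (hA : #A ≤ 5) (hB : #B ≤ 5) (huv : 5 ≤ #Luv) (hvz : 3 ≤ #Lvz)
    (hxy : 5 ≤ #Lxy) (hxt : 3 ≤ #Lxt) : Precolorable Luv Lvz Lxy Lxt A B := by
  by_cases hvzxt : (Lvz ∩ Lxt).Nonempty
  · obtain ⟨c, hc⟩ := hvzxt
    exact precolorable_of_mem_inter hc hA huv hxy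
  have h_not_both : ¬(Lvz ⊆ A ∧ Lxt ⊆ A) := fun ⟨hvzA, hxtA⟩ =>
    hvzxt (inter_nonempty_of_card_lt_card_add_card hvzA hxtA (by omega))
  by_cases hvzA : Lvz ⊆ A
  · obtain ⟨b, hb, hbA⟩ := not_subset.mp fun hxtA => h_not_both ⟨hvzA, hxtA⟩
    exact precolorable_of_subset hvzA hb hbA hA hB huv hvz hxy
  obtain ⟨a, ha, haA⟩ := not_subset.mp hvzA
  by_cases hxtA : Lxt ⊆ A
  · exact (precolorable_of_subset hxtA ha haA hA hB hxy hxt huv).symm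
  obtain ⟨b, hb, hbA⟩ := not_subset.mp hxtA
  exact precolorable_of_notMem ha haA hb hbA hB huv hxy

end Config1

/-- Lemma 3 of the note.  The six edges of the path `u-v-w-x-y` plus pendant edges
`vz`, `xt`; strong-coloring conflicts among the four edges `uv, vz, xy, xt` are
exactly `{uv,vz}` and `{xy,xt}`, and both `vw` and `wx` conflict with all four. -/
theorem config1_precoloring
    (Luv Lvw Lwx Lxy Lvz Lxt : Finset ℕ)
    (huv : 5 ≤ Luv.card) (hvw : 5 ≤ Lvw.card) (hwx : 5 ≤ Lwx.card)
    (hxy : 5 ≤ Lxy.card) (hvz : 3 ≤ Lvz.card) (hxt : 3 ≤ Lxt.card) :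
    ∃ cuv ∈ Luv, ∃ cvz ∈ Lvz, ∃ cxy ∈ Lxy, ∃ cxt ∈ Lxt,
      cuv ≠ cvz ∧ cxy ≠ cxt ∧
      3 ≤ (Lvw \ {cuv, cvz, cxy, cxt}).card ∧
      2 ≤ (Lwx \ {cuv, cvz, cxy, cxt}).card := by
  obtain ⟨A, hAvw, hA⟩ := exists_subset_card_eq hvw
  obtain ⟨B, hBwx, hB⟩ := exists_subset_card_eq hwx
  obtain ⟨cuv, hcuv, cvz, hcvz, cxy, hcxy, cxt, hcxt, hv, hx, hSA, hSB⟩ :=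
    Config1.precolorable hA.le hB.le huv hvz hxy hxt
  refine ⟨cuv, hcuv, cvz, hcvz, cxy, hcxy, cxt, hcxt, hv, hx, ?_, ?_⟩
  · calc 3 ≤ #(A \ {cuv, cvz, cxy, cxt}) := by rw [card_sdiff]; omega
      _ ≤ #(Lvw \ {cuv, cvz, cxy, cxt}) := card_le_card (sdiff_subset_sdiff hAvw le_rfl)
  · calc 2 ≤ #(B \ {cuv, cvz, cxy, cxt}) := by rw [card_sdiff]; omega
      _ ≤ #(Lwx \ {cuv, cvz, cxy, cxt}) := card_le_card (sdiff_subset_sdiff hBwx le_rfl)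
end

section
/- Let n ≥ 5 be odd and let G be the graph formed from the path v1–v2–...–vn together with, for each even i in {2,4,...,n−1}, a pendant vertex v'_i adjacent to v_i. Suppose lists satisfy |L(v1v2)| ≥ 3, |L(v2v'2)| ≥ 2, |L(v2v3)| ≥ 4, |L(v_{n−2}v_{n−1})| ≥ 4, |L(v_{n−1}v'_{n−1})| ≥ 2, |L(v_{n−1}v_n)| ≥ 3, and (when n ≥ 7) |L(v_i v_{i+1})| ≥ 5 for all i in {3,...,n−3} and |L(v_j v'_j)| ≥ 3 for all even j in {4,...,n−3}. Then G admits a strong edge-coloring choosing each edge's color from its list. -/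
/-!
Write `e_i = v_i v_{i+1}` (list `L i`) and `p_j = v_j v'_j` (list `M j`). We pass from `m` to
`m + 2` by adding `e_m`, `e_{m+1}` and `p_{m+1}`. The edges `e_{m+1}` and `p_{m+1}` conflict
only with each other, with `e_m` and with `e_{m-1}`; two forbidden colours can prevent distinct
choices from their lists (of sizes `3` and `2`) only if both lie in a fixed set `T` of at most
three colours. So colour `e_m` by some `a ∈ L m \ T`, delete `a` from the lists of the old edges
`e_{m-2}`, `e_{m-1}`, `p_{m-1}` conflicting with `e_m`, colour the shorter graph by induction
(those lists had sizes `5, 5, 3`, so its hypotheses survive the deletion), and finish with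
`e_{m+1}`, `p_{m+1}`, which need only avoid `a` and the colour of `e_{m-1}`. For `n = 5` the
shorter graph is the triangle `e_1, e_2, p_2` with reduced lists of sizes `2, 3, 1`, coloured
greedily.
-/

open Finset

namespace PendantPath

variable {α : Type*}

structure IsStrongListColoring (n : ℕ) (L M : ℕ → Finset α) (c d : ℕ → α) : Prop where
  mem_path : ∀ i, 1 ≤ i → i ≤ n - 1 → c i ∈ L i
  mem_pendant : ∀ j, 2 ≤ j → j ≤ n - 1 → Even j → d j ∈ M j
  path_ne : ∀ i j, 1 ≤ i → i < j → j ≤ n - 1 → j ≤ i + 2 → c i ≠ c j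
  path_ne_pendant : ∀ i j, 1 ≤ i → i ≤ n - 1 → 2 ≤ j → j ≤ n - 1 → Even j →
    i ≤ j + 1 → j ≤ i + 2 → c i ≠ d j

structure HasListSizes (n : ℕ) (L M : ℕ → Finset α) : Prop where
  card_path_one : 3 ≤ #(L 1)
  card_pendant_two : 2 ≤ #(M 2)
  card_path_two : 4 ≤ #(L 2)
  card_path_sub_two : 4 ≤ #(L (n - 2))
  card_pendant_sub_one : 2 ≤ #(M (n - 1))
  card_path_sub_one : 3 ≤ #(L (n - 1))
  card_path_mid : ∀ i, 3 ≤ i → i ≤ n - 3 → 5 ≤ #(L i)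
  card_pendant_mid : ∀ j, 4 ≤ j → j ≤ n - 3 → Even j → 3 ≤ #(M j)

theorem IsStrongListColoring.mono {n : ℕ} {L L' M M' : ℕ → Finset α} {c d : ℕ → α}
    (h : IsStrongListColoring n L' M' c d) (hL : ∀ i, L' i ⊆ L i) (hM : ∀ j, M' j ⊆ M j) :
    IsStrongListColoring n L M c d where
  mem_path i h₁ h₂ := hL i (h.mem_path i h₁ h₂)
  mem_pendant j h₁ h₂ hj := hM j (h.mem_pendant j h₁ h₂ hj)
  path_ne := h.path_ne
  path_ne_pendant := h.path_ne_pendant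

theorem IsStrongListColoring.extend {m : ℕ} (hm : Odd m) {L M : ℕ → Finset α}
    {c d : ℕ → α} (h : IsStrongListColoring m L M c d) {a e b : α}
    (ha : a ∈ L m) (he : e ∈ L (m + 1)) (hb : b ∈ M (m + 1))
    (hca₂ : c (m - 2) ≠ a) (hca₁ : c (m - 1) ≠ a) (hda : d (m - 1) ≠ a)
    (hce : c (m - 1) ≠ e) (hcb : c (m - 1) ≠ b) (hae : a ≠ e) (hab : a ≠ b)
    (heb : e ≠ b) :
    IsStrongListColoring (m + 2) L M
      (fun i ↦ if i = m then a else if i = m + 1 then e else c i)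
      (fun j ↦ if j = m + 1 then b else d j) := by
  obtain ⟨k, rfl⟩ := hm
  refine ⟨fun i h₁ h₂ ↦ ?_, fun j h₁ h₂ hj ↦ ?_, fun i j h₁ hij hj h₂ ↦ ?_,
    fun i j h₁ h₂ hj₁ hj₂ hj h₃ h₄ ↦ ?_⟩
  · split_ifs with h₃ h₄
    · exact h₃ ▸ ha
    · exact h₄ ▸ he
    · exact h.mem_path i h₁ (by omega)
  · split_ifs with h₃
    · exact h₃ ▸ hb
    · exact h.mem_pendant j h₁ (by grind) hj
  · have := h.path_ne
    split_ifs <;> grind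
  · have := h.path_ne_pendant
    split_ifs <;> grind

theorem exists_coloring_three [DecidableEq α] {L M : ℕ → Finset α} (h₁ : 2 ≤ #(L 1))
    (h₂ : 1 ≤ #(M 2)) (h₃ : 3 ≤ #(L 2)) : ∃ c d, IsStrongListColoring 3 L M c d := by
  obtain ⟨y, hy⟩ := card_pos.mp h₂
  obtain ⟨x, hx, hxy⟩ := exists_mem_ne h₁ y
  obtain ⟨z, hz, hzxy⟩ := exists_mem_notMem_of_card_lt_card (s := {x, y}) (t := L 2)
    (card_le_two.trans_lt h₃)
  simp only [mem_insert, mem_singleton, not_or] at hzxy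
  refine ⟨fun i ↦ if i = 1 then x else z, fun _ ↦ y, ⟨?_, ?_, ?_, ?_⟩⟩ <;> grind

theorem exists_ne_of_two_le_card_union [DecidableEq α] {U V : Finset α} (hU : U.Nonempty)
    (hV : V.Nonempty) (h : 2 ≤ #(U ∪ V)) : ∃ u ∈ U, ∃ v ∈ V, u ≠ v := by
  obtain ⟨v, hv⟩ := hV
  by_cases hUv : U ⊆ {v}
  · obtain ⟨w, hw, hwv⟩ := exists_mem_ne h v
    have hwV : w ∈ V := by grind
    exact ⟨v, by grind, w, hwV, hwv.symm⟩
  · obtain ⟨u, hu, huv⟩ := not_subset.mp hUv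
    exact ⟨u, hu, v, hv, by simpa using huv⟩

theorem exists_card_le_three_distinct_avoiding [DecidableEq α] {A P : Finset α}
    (hA : 3 ≤ #A) (hP : 2 ≤ #P) :
    ∃ T : Finset α, #T ≤ 3 ∧ ∀ x ∉ T, ∀ y,
      ∃ a ∈ A, ∃ p ∈ P, a ≠ p ∧ x ≠ a ∧ y ≠ a ∧ x ≠ p ∧ y ≠ p := by
  obtain ⟨P₀, hP₀P, hP₀⟩ := exists_subset_card_eq hP
  have avoiding_of_card : ∀ T, P₀ ⊆ T → (∀ x ∉ T, ∀ y, 2 ≤ #((A ∪ P₀) \ {x, y})) →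
      ∀ x ∉ T, ∀ y, ∃ a ∈ A, ∃ p ∈ P, a ≠ p ∧ x ≠ a ∧ y ≠ a ∧ x ≠ p ∧ y ≠ p := by
    intro T hP₀T hcard x hx y
    have hA' : (A \ {x, y}).Nonempty := by
      rw [← card_pos]
      have := le_card_sdiff {x, y} A
      have := card_le_two (a := x) (b := y)
      omega
    have hP₀' : (P₀ \ {x, y}).Nonempty := by
      obtain ⟨p, hp, hpy⟩ := exists_mem_ne (by omega : 1 < #P₀) y
      exact ⟨p, by grind⟩
    obtain ⟨a, ha, p, hp, hap⟩ := exists_ne_of_two_le_card_union hA' hP₀'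
      (by rw [← union_sdiff_distrib]; exact hcard x hx y)
    simp only [mem_sdiff, mem_insert, mem_singleton, not_or] at ha hp
    exact ⟨a, ha.1, p, hP₀P hp.1, hap, Ne.symm ha.2.1, Ne.symm ha.2.2, Ne.symm hp.2.1,
      Ne.symm hp.2.2⟩
  -- If `A ∪ P₀` is small, a colour `x` outside it costs nothing; otherwise `A ∪ P₀` survives
  -- any two deletions, and only `{x, y} = P₀` can still block.
  by_cases hAP : #(A ∪ P₀) ≤ 3
  · refine ⟨A ∪ P₀, hAP, avoiding_of_card _ subset_union_right fun x hx y ↦ ?_⟩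
    rw [sdiff_insert_of_notMem hx]
    have hsdiff := le_card_sdiff {y} (A ∪ P₀)
    have := card_le_card (subset_union_left (s₁ := A) (s₂ := P₀))
    rw [card_singleton] at hsdiff
    omega
  · refine ⟨P₀, by omega, avoiding_of_card _ subset_rfl fun x _ y ↦ ?_⟩
    have := le_card_sdiff {x, y} (A ∪ P₀)
    have := card_le_two (a := x) (b := y)
    omega

section eraseFrom

variable [DecidableEq α]

def eraseFrom (k : ℕ) (a : α) (L : ℕ → Finset α) (i : ℕ) : Finset α :=
  if k ≤ i then (L i).erase a else L i

theorem eraseFrom_subset (k : ℕ) (a : α) (L : ℕ → Finset α) (i : ℕ) :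
    eraseFrom k a L i ⊆ L i := by
  unfold eraseFrom
  split_ifs
  exacts [erase_subset a (L i), subset_rfl]

theorem eraseFrom_of_lt {k i : ℕ} (a : α) (L : ℕ → Finset α) (h : i < k) :
    eraseFrom k a L i = L i :=
  if_neg (by omega)

theorem ne_of_mem_eraseFrom {k i : ℕ} {a x : α} {L : ℕ → Finset α} (h : k ≤ i)
    (hx : x ∈ eraseFrom k a L i) : x ≠ a := by
  rw [eraseFrom, if_pos h] at hx
  exact ne_of_mem_erase hx

theorem card_sub_one_le_card_eraseFrom (k : ℕ) (a : α) (L : ℕ → Finset α) (i : ℕ) :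
    #(L i) - 1 ≤ #(eraseFrom k a L i) := by
  unfold eraseFrom
  split_ifs
  exacts [pred_card_le_card_erase, Nat.sub_le _ _]

theorem HasListSizes.eraseFrom {m : ℕ} (hm : 5 ≤ m) (hodd : Odd m) {L M : ℕ → Finset α}
    (h : HasListSizes (m + 2) L M) (a : α) :
    HasListSizes m (eraseFrom (m - 2) a L) (eraseFrom (m - 2) a M) := by
  have hL := card_sub_one_le_card_eraseFrom (m - 2) a L
  have hM := card_sub_one_le_card_eraseFrom (m - 2) a M
  refine ⟨?_, ?_, ?_, ?_, ?_, ?_, fun i hi hi' ↦ ?_, fun j hj hj' hje ↦ ?_⟩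
  · rw [eraseFrom_of_lt a L (by omega)]; exact h.card_path_one
  · rw [eraseFrom_of_lt a M (by omega)]; exact h.card_pendant_two
  · rw [eraseFrom_of_lt a L (by omega)]; exact h.card_path_two
  · have := h.card_path_mid (m - 2) (by omega) (by omega); grind
  · have := h.card_pendant_mid (m - 1) (by omega) (by omega) (by grind); grind
  · have := h.card_path_mid (m - 1) (by omega) (by omega); grind
  · rw [eraseFrom_of_lt a L (by omega)]; exact h.card_path_mid i hi (by omega)
  · rw [eraseFrom_of_lt a M (by omega)]; exact h.card_pendant_mid j hj (by omega) hje

theorem exists_coloring_add_two {m : ℕ} (hm : 3 ≤ m) (hodd : Odd m) {L M : ℕ → Finset α}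
    (hLm : 4 ≤ #(L m)) (hM : 2 ≤ #(M (m + 1))) (hL : 3 ≤ #(L (m + 1)))
    (ih : ∀ a, ∃ c d,
      IsStrongListColoring m (eraseFrom (m - 2) a L) (eraseFrom (m - 2) a M) c d) :
    ∃ c d, IsStrongListColoring (m + 2) L M c d := by
  obtain ⟨T, hT, hTpair⟩ := exists_card_le_three_distinct_avoiding hL hM
  obtain ⟨a, ha, haT⟩ := exists_mem_notMem_of_card_lt_card (hT.trans_lt hLm)
  obtain ⟨c, d, hcd⟩ := ih a
  obtain ⟨e, he, b, hb, heb, hae, hce, hab, hcb⟩ := hTpair a haT (c (m - 1))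
  have hca₂ := ne_of_mem_eraseFrom le_rfl (hcd.mem_path (m - 2) (by omega) (by omega))
  have hca₁ := ne_of_mem_eraseFrom (by omega) (hcd.mem_path (m - 1) (by omega) le_rfl)
  have hda := ne_of_mem_eraseFrom (by omega)
    (hcd.mem_pendant (m - 1) (by omega) le_rfl (by grind))
  exact ⟨_, _, (hcd.mono (eraseFrom_subset _ _ _) (eraseFrom_subset _ _ _)).extend hodd ha he hb
    hca₂ hca₁ hda hce hcb hae hab heb⟩

theorem HasListSizes.exists_isStrongListColoring {n : ℕ} (hn : 5 ≤ n) (hodd : Odd n)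
    {L M : ℕ → Finset α} (h : HasListSizes n L M) :
    ∃ c d, IsStrongListColoring n L M c d := by
  obtain ⟨k, rfl⟩ : ∃ k, n = 2 * k + 5 := by
    obtain ⟨t, rfl⟩ := hodd
    exact ⟨t - 2, by omega⟩
  clear hn hodd
  induction k generalizing L M with
  | zero =>
    refine exists_coloring_add_two (m := 3) le_rfl (by decide) h.card_path_sub_two
      h.card_pendant_sub_one h.card_path_sub_one fun a ↦ exists_coloring_three ?_ ?_ ?_
    · have := card_sub_one_le_card_eraseFrom (3 - 2) a L 1; have := h.card_path_one; omega
    · have := card_sub_one_le_card_eraseFrom (3 - 2) a M 2; have := h.card_pendant_two; omega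
    · have := card_sub_one_le_card_eraseFrom (3 - 2) a L 2; have := h.card_path_two; omega
  | succ k ih =>
    rw [show 2 * (k + 1) + 5 = 2 * k + 5 + 2 by ring] at h ⊢
    exact exists_coloring_add_two (by omega) (by grind) h.card_path_sub_two
      h.card_pendant_sub_one h.card_path_sub_one fun a ↦ ih (h.eraseFrom (by omega) (by grind) a)

end eraseFrom

end PendantPath

/-- Lemma 5 of the note.  `G` is the path `v1-v2-...-vn` (`n ≥ 5` odd) together
with a pendant vertex `v'_j` attached to `v_j` for each even `j` with
`2 ≤ j ≤ n-1`.  Here `L i` is the list of the path edge `v_i v_{i+1}`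
(`1 ≤ i ≤ n-1`) and `M j` the list of the pendant edge `v_j v'_j`.
Two path edges `e_i, e_j` (`i < j`) conflict iff `j ≤ i + 2`; a path edge `e_i`
conflicts with a pendant edge `p_j` iff `i ≤ j + 1 ∧ j ≤ i + 2`; two pendant
edges never conflict.  Under the stated list sizes a strong edge-coloring from
the lists exists. -/
theorem config2_general_colorable
    (n : ℕ) (hn5 : 5 ≤ n) (hodd : Odd n)
    (L M : ℕ → Finset ℕ)
    (h1 : 3 ≤ (L 1).card) (hM2 : 2 ≤ (M 2).card) (h2 : 4 ≤ (L 2).card)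
    (hn2 : 4 ≤ (L (n - 2)).card) (hMn1 : 2 ≤ (M (n - 1)).card)
    (hn1 : 3 ≤ (L (n - 1)).card)
    (hmid : ∀ i, 3 ≤ i → i ≤ n - 3 → 5 ≤ (L i).card)
    (hMmid : ∀ j, 4 ≤ j → j ≤ n - 3 → Even j → 3 ≤ (M j).card) :
    ∃ c d : ℕ → ℕ,
      (∀ i, 1 ≤ i → i ≤ n - 1 → c i ∈ L i) ∧
      (∀ j, 2 ≤ j → j ≤ n - 1 → Even j → d j ∈ M j) ∧
      (∀ i j, 1 ≤ i → i < j → j ≤ n - 1 → j ≤ i + 2 → c i ≠ c j) ∧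
      (∀ i j, 1 ≤ i → i ≤ n - 1 → 2 ≤ j → j ≤ n - 1 → Even j →
        i ≤ j + 1 → j ≤ i + 2 → c i ≠ d j) := by
  obtain ⟨c, d, hcd⟩ := PendantPath.HasListSizes.exists_isStrongListColoring hn5 hodd
    ⟨h1, hM2, h2, hn2, hMn1, hn1, hmid, hMmid⟩
  exact ⟨c, d, hcd.mem_path, hcd.mem_pendant, hcd.path_ne, hcd.path_ne_pendant⟩
end

section
/- A minimal counterexample to the statement 'every (2,3)-bipartite graph is strongly 6-edge-choosable' contains no 4-cycle. Equivalently: let G be a (2,3)-bipartite graph containing a 4-cycle u,v,w,x where u and w have degree at most 2, and suppose every proper subgraph obtained by deleting vertices is strongly 6-edge-choosable; then G is strongly 6-edge-choosable. -/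
/-- Strong conflict between two edges of a simple graph. -/
def StrongConflict {V : Type*} (G : SimpleGraph V) (e f : Sym2 V) : Prop :=
  e ≠ f ∧ ((∃ v, v ∈ e ∧ v ∈ f) ∨ (∃ u v, u ∈ e ∧ v ∈ f ∧ G.Adj u v))

/-- `G` is strongly `k`-edge-choosable. -/
def StrongEdgeChoosable {V : Type*} (G : SimpleGraph V) (k : ℕ) : Prop :=
  ∀ L : Sym2 V → Finset ℕ, (∀ e ∈ G.edgeSet, k ≤ (L e).card) →
    ∃ c : Sym2 V → ℕ, (∀ e ∈ G.edgeSet, c e ∈ L e) ∧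
      ∀ e ∈ G.edgeSet, ∀ f ∈ G.edgeSet, StrongConflict G e f → c e ≠ c f

/-!
Delete `u` and `w` and colour the remaining edges by minimality. As `N(u) = N(w) = {v, x}`, an
edge such as `uv` is in conflict with at most three coloured edges, namely `vz`, `xy` and `zt`,
where `z` and `y` are the third neighbours of `v` and `x` and `t` is the other neighbour of
`z ∈ A`. So each of the four edges at `u` and `w` keeps at least three free colours, and Hall's
theorem colours them unless all four have the same three free colours. In that case the colours
of `vz`, `xy`, `zt` are distinct and lie in the list of `uv`. Recolouring `vz` (or `xy`) with a
colour outside that 3-set, or else recolouring both `vz` and `xy` with a common colour of the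
3-set (they do not conflict, as `G` has no odd cycles), frees a fourth colour at `uv` or `ux`.
-/

section

variable {V : Type*}

theorem StrongConflict.symm {G : SimpleGraph V} {e f : Sym2 V} (h : StrongConflict G e f) :
    StrongConflict G f e := by
  obtain ⟨hne, ⟨a, hae, haf⟩ | ⟨a, b, hae, hbf, hab⟩⟩ := h
  · exact ⟨hne.symm, Or.inl ⟨a, haf, hae⟩⟩
  · exact ⟨hne.symm, Or.inr ⟨b, a, hbf, hae, hab.symm⟩⟩

theorem StrongConflict.exists_adj {G : SimpleGraph V} {a b : V} {f : Sym2 V} (hab : G.Adj a b)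
    (h : StrongConflict G s(a, b) f) : ∃ c ∈ f, G.Adj a c ∨ G.Adj b c := by
  obtain ⟨-, ⟨d, hd, hdf⟩ | ⟨d, c, hd, hcf, hdc⟩⟩ := h
  · rcases Sym2.mem_iff.mp hd with rfl | rfl
    · exact ⟨d, hdf, Or.inr hab.symm⟩
    · exact ⟨d, hdf, Or.inl hab⟩
  · rcases Sym2.mem_iff.mp hd with rfl | rfl
    · exact ⟨c, hcf, Or.inl hdc⟩
    · exact ⟨c, hcf, Or.inr hdc⟩

section ListColoring

variable (G : SimpleGraph V)

def IsStrongListColoringOn (L : Sym2 V → Finset ℕ) (E : Set (Sym2 V)) (c : Sym2 V → ℕ) : Prop :=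
  (∀ e ∈ E, c e ∈ L e) ∧ ∀ e ∈ E, ∀ f ∈ E, StrongConflict G e f → c e ≠ c f

def conflictsIn (E : Set (Sym2 V)) (e : Sym2 V) : Set (Sym2 V) :=
  {f ∈ E | StrongConflict G e f}

open Classical in
noncomputable def freeColors (L : Sym2 V → Finset ℕ) (E : Set (Sym2 V)) (c : Sym2 V → ℕ)
    (e : Sym2 V) : Finset ℕ :=
  {α ∈ L e | ∀ f ∈ conflictsIn G E e, c f ≠ α}

variable {G} {L : Sym2 V → Finset ℕ} {E : Set (Sym2 V)} {c : Sym2 V → ℕ} {e : Sym2 V} {α : ℕ}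

theorem mem_freeColors :
    α ∈ freeColors G L E c e ↔ α ∈ L e ∧ ∀ f ∈ conflictsIn G E e, c f ≠ α := by
  simp [freeColors]

theorem IsStrongListColoringOn.mono {E' : Set (Sym2 V)} (hc : IsStrongListColoringOn G L E c)
    (h : E' ⊆ E) : IsStrongListColoringOn G L E' c :=
  ⟨fun e he => hc.1 e (h he), fun e he f hf => hc.2 e (h he) f (h hf)⟩

theorem IsStrongListColoringOn.update [DecidableEq V] (hc : IsStrongListColoringOn G L E c)
    (hα : α ∈ freeColors G L E c e) :
    IsStrongListColoringOn G L (insert e E) (Function.update c e α) := by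
  rw [mem_freeColors] at hα
  refine ⟨fun f hf => ?_, fun f hf g hg hfg => ?_⟩
  · by_cases hfe : f = e
    · subst hfe; simpa using hα.1
    · simpa [hfe] using hc.1 f (hf.resolve_left hfe)
  · by_cases hfe : f = e <;> by_cases hge : g = e
    · exact absurd (hfe.trans hge.symm) hfg.1
    · subst hfe
      simpa [hge] using (hα.2 g ⟨hg.resolve_left hge, hfg⟩).symm
    · subst hge
      simpa [hfe] using hα.2 f ⟨hf.resolve_left hfe, hfg.symm⟩
    · simpa [hfe, hge] using hc.2 f (hf.resolve_left hfe) g (hg.resolve_left hge) hfg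

theorem coe_sdiff_freeColors_subset :
    (↑(L e \ freeColors G L E c e) : Set ℕ) ⊆ c '' conflictsIn G E e := by
  intro α hα
  simp only [Finset.coe_sdiff, Set.mem_sdiff, Finset.mem_coe, mem_freeColors, not_and,
    not_forall, not_not] at hα
  obtain ⟨f, hf, rfl⟩ := hα.2 hα.1
  exact ⟨f, hf, rfl⟩

theorem card_sdiff_freeColors_le [Finite V] :
    (L e \ freeColors G L E c e).card ≤ (c '' conflictsIn G E e).ncard := by
  rw [← Set.ncard_coe_finset]
  exact Set.ncard_le_ncard coe_sdiff_freeColors_subset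

theorem card_le_card_freeColors_add [Finite V] :
    (L e).card ≤ (freeColors G L E c e).card + (conflictsIn G E e).ncard := by
  have := card_sdiff_freeColors_le (G := G) (L := L) (E := E) (c := c) (e := e)
  have := Set.ncard_image_le (f := c) (s := conflictsIn G E e)
  have := Finset.card_le_card_sdiff_add_card (s := L e) (t := freeColors G L E c e)
  omega

theorem injOn_of_card_freeColors [Finite V] {k : ℕ} (hC : (conflictsIn G E e).ncard ≤ k)
    (hk : (freeColors G L E c e).card + k ≤ (L e).card) :
    (conflictsIn G E e).ncard = k ∧ Set.InjOn c (conflictsIn G E e) ∧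
      ∀ f ∈ conflictsIn G E e, c f ∈ L e := by
  have hblocked := coe_sdiff_freeColors_subset (G := G) (L := L) (E := E) (c := c) (e := e)
  have h₁ : k ≤ (L e \ freeColors G L E c e).card := by
    have := Finset.card_le_card_sdiff_add_card (s := L e) (t := freeColors G L E c e)
    omega
  have h₂ := card_sdiff_freeColors_le (G := G) (L := L) (E := E) (c := c) (e := e)
  have h₃ : (c '' conflictsIn G E e).ncard ≤ (conflictsIn G E e).ncard := Set.ncard_image_le
  refine ⟨by omega, (Set.ncard_image_iff (Set.toFinite _)).mp (by omega), fun f hf => ?_⟩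
  have heq := Set.eq_of_subset_of_ncard_le hblocked (by rw [Set.ncard_coe_finset]; omega)
  have hmem : c f ∈ (↑(L e \ freeColors G L E c e) : Set ℕ) := heq ▸ Set.mem_image_of_mem c hf
  exact (Finset.mem_sdiff.mp hmem).1

/-- Recolouring the edges of `R` with colours from `Γ` frees their old colours, and keeps free
every old free colour outside `Γ`. -/
theorem card_add_card_sdiff_le_card_freeColors {c' : Sym2 V → ℕ} {R : Finset (Sym2 V)}
    {Γ : Finset ℕ} (hinj : Set.InjOn c (conflictsIn G E e))
    (hL : ∀ f ∈ conflictsIn G E e, c f ∈ L e) (hR : ↑R ⊆ conflictsIn G E e)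
    (hagree : ∀ f ∉ R, c' f = c f) (hnew : ∀ f ∈ R, c' f ∈ Γ) (hold : ∀ f ∈ R, c f ∉ Γ) :
    R.card + (freeColors G L E c e \ Γ).card ≤ (freeColors G L E c' e).card := by
  have hdisj : Disjoint (R.image c) (freeColors G L E c e \ Γ) := by
    rw [Finset.disjoint_left]
    intro α hα hfree
    obtain ⟨r, hr, rfl⟩ := Finset.mem_image.mp hα
    exact (mem_freeColors.mp (Finset.mem_sdiff.mp hfree).1).2 r (hR hr) rfl
  have hsub : R.image c ∪ (freeColors G L E c e \ Γ) ⊆ freeColors G L E c' e := by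
    intro α hα
    rw [mem_freeColors]
    rcases Finset.mem_union.mp hα with hα | hα
    · obtain ⟨r, hr, rfl⟩ := Finset.mem_image.mp hα
      refine ⟨hL r (hR hr), fun f hf => ?_⟩
      by_cases hfR : f ∈ R
      · exact fun h => hold r hr (h ▸ hnew f hfR)
      · rw [hagree f hfR]
        exact hinj.ne hf (hR hr) fun h => hfR (h ▸ hr)
    · obtain ⟨hfree, hΓ⟩ := Finset.mem_sdiff.mp hα
      refine ⟨(mem_freeColors.mp hfree).1, fun f hf => ?_⟩
      by_cases hfR : f ∈ R
      · exact fun h => hΓ (h ▸ hnew f hfR)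
      · rw [hagree f hfR]
        exact (mem_freeColors.mp hfree).2 f hf
  calc R.card + (freeColors G L E c e \ Γ).card
      = (R.image c ∪ (freeColors G L E c e \ Γ)).card := by
        rw [Finset.card_union_of_disjoint hdisj, Finset.card_image_of_injOn (hinj.mono hR)]
    _ ≤ (freeColors G L E c' e).card := Finset.card_le_card hsub

theorem freeColors_update_of_not_strongConflict [DecidableEq V] {e' : Sym2 V} {β : ℕ}
    (h : ¬ StrongConflict G e e') :
    freeColors G L E (Function.update c e' β) e = freeColors G L E c e := by
  ext α
  simp only [mem_freeColors]
  refine and_congr_right fun _ => forall₂_congr fun f hf => ?_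
  rw [Function.update_of_ne fun hfe : f = e' => h (hfe ▸ hf.2)]

theorem IsStrongListColoringOn.exists_card_freeColors_lt [DecidableEq V]
    (hc : IsStrongListColoringOn G L E c) {e' : Sym2 V} (he' : e' ∈ conflictsIn G E e)
    (hinj : Set.InjOn c (conflictsIn G E e)) (hL : ∀ f ∈ conflictsIn G E e, c f ∈ L e)
    (hα : α ∈ freeColors G L E c e') (hαe' : α ≠ c e') (hαe : α ∉ freeColors G L E c e) :
    ∃ c', IsStrongListColoringOn G L E c' ∧
      (freeColors G L E c e).card < (freeColors G L E c' e).card := by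
  refine ⟨Function.update c e' α, ?_, ?_⟩
  · simpa [Set.insert_eq_of_mem he'.1] using hc.update hα
  · have := card_add_card_sdiff_le_card_freeColors (c' := Function.update c e' α) (R := {e'})
      (Γ := {α}) hinj hL (by simpa using he')
      (fun f hf => Function.update_of_ne (by simpa using hf) _ _) (by simp)
      (by simpa using hαe'.symm)
    rw [Finset.sdiff_singleton_eq_erase, Finset.erase_eq_of_notMem hαe,
      Finset.card_singleton] at this
    omega

theorem IsStrongListColoringOn.exists_recoloring_pair [DecidableEq V]
    (hc : IsStrongListColoringOn G L E c) {e₁ e₂ : Sym2 V} (he₁ : e₁ ∈ conflictsIn G E e)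
    (he₂ : e₂ ∈ conflictsIn G E e) (hne : e₁ ≠ e₂) (hnc : ¬ StrongConflict G e₂ e₁)
    (hinj : Set.InjOn c (conflictsIn G E e)) (hL : ∀ f ∈ conflictsIn G E e, c f ∈ L e)
    {γ : ℕ} (hγ₁ : γ ∈ freeColors G L E c e₁) (hγ₂ : γ ∈ freeColors G L E c e₂)
    (hγc₁ : γ ≠ c e₁) (hγc₂ : γ ≠ c e₂) :
    ∃ c', IsStrongListColoringOn G L E c' ∧
      2 + (freeColors G L E c e \ {γ}).card ≤ (freeColors G L E c' e).card := by
  set c₁ := Function.update c e₁ γ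
  have hc₁ : IsStrongListColoringOn G L E c₁ := by
    simpa [Set.insert_eq_of_mem he₁.1] using hc.update hγ₁
  have hγ₂' : γ ∈ freeColors G L E c₁ e₂ := by
    rwa [freeColors_update_of_not_strongConflict hnc]
  refine ⟨Function.update c₁ e₂ γ, by simpa [Set.insert_eq_of_mem he₂.1] using hc₁.update hγ₂', ?_⟩
  have := card_add_card_sdiff_le_card_freeColors (c' := Function.update c₁ e₂ γ)
    (R := {e₁, e₂}) (Γ := {γ}) hinj hL (by simp [Set.insert_subset_iff, he₁, he₂])
    (fun f hf => by simp_all [c₁, Function.update_of_ne])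
    (by simp [c₁, hne]) (by simp [hγc₁.symm, hγc₂.symm])
  rwa [Finset.card_pair hne] at this

/-- Recolour `e₁`, or `e₂`, or both with a common colour. -/
theorem IsStrongListColoringOn.exists_four_le_card_freeColors [DecidableEq V]
    (hc : IsStrongListColoringOn G L E c) {e e' e₁ e₂ : Sym2 V}
    (hU : freeColors G L E c e = freeColors G L E c e') (h3 : (freeColors G L E c e).card = 3)
    (he₁ : e₁ ∈ conflictsIn G E e) (he₂ : e₂ ∈ conflictsIn G E e)
    (he₂' : e₂ ∈ conflictsIn G E e') (hne : e₁ ≠ e₂) (hnc : ¬ StrongConflict G e₂ e₁)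
    (hinj : Set.InjOn c (conflictsIn G E e)) (hL : ∀ f ∈ conflictsIn G E e, c f ∈ L e)
    (hinj' : Set.InjOn c (conflictsIn G E e')) (hL' : ∀ f ∈ conflictsIn G E e', c f ∈ L e')
    (hfree₁ : 3 ≤ (freeColors G L E c e₁).card) (hfree₂ : 3 ≤ (freeColors G L E c e₂).card) :
    ∃ c', IsStrongListColoringOn G L E c' ∧
      (4 ≤ (freeColors G L E c' e).card ∨ 4 ≤ (freeColors G L E c' e').card) := by
  by_cases h₁ : ∃ α ∈ freeColors G L E c e₁, α ≠ c e₁ ∧ α ∉ freeColors G L E c e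
  · obtain ⟨α, hα, hαc, hαU⟩ := h₁
    obtain ⟨c', hc', hlt⟩ := hc.exists_card_freeColors_lt he₁ hinj hL hα hαc hαU
    exact ⟨c', hc', Or.inl (by omega)⟩
  by_cases h₂ : ∃ β ∈ freeColors G L E c e₂, β ≠ c e₂ ∧ β ∉ freeColors G L E c e'
  · obtain ⟨β, hβ, hβc, hβU⟩ := h₂
    obtain ⟨c', hc', hlt⟩ := hc.exists_card_freeColors_lt he₂' hinj' hL' hβ hβc hβU
    exact ⟨c', hc', Or.inr (by rw [← hU] at hlt; omega)⟩
  simp only [not_exists, not_and, not_not] at h₁ h₂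
  -- Otherwise the other free colours of `e₁` and of `e₂` lie in the same 3-set.
  obtain ⟨γ, hγ⟩ : ((freeColors G L E c e₁).erase (c e₁) ∩
      (freeColors G L E c e₂).erase (c e₂)).Nonempty := by
    refine Finset.inter_nonempty_of_card_lt_card_add_card (s := freeColors G L E c e)
      (fun α hα => h₁ α (Finset.mem_of_mem_erase hα) (Finset.ne_of_mem_erase hα))
      (fun β hβ => hU ▸ h₂ β (Finset.mem_of_mem_erase hβ) (Finset.ne_of_mem_erase hβ)) ?_
    have := Finset.pred_card_le_card_erase (s := freeColors G L E c e₁) (a := c e₁)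
    have := Finset.pred_card_le_card_erase (s := freeColors G L E c e₂) (a := c e₂)
    omega
  obtain ⟨hγ₁, hγ₂⟩ := Finset.mem_inter.mp hγ
  obtain ⟨c', hc', h4⟩ := hc.exists_recoloring_pair he₁ he₂ hne hnc hinj hL
    (Finset.mem_of_mem_erase hγ₁) (Finset.mem_of_mem_erase hγ₂) (Finset.ne_of_mem_erase hγ₁)
    (Finset.ne_of_mem_erase hγ₂)
  have hγU := h₁ γ (Finset.mem_of_mem_erase hγ₁) (Finset.ne_of_mem_erase hγ₁)
  rw [Finset.sdiff_singleton_eq_erase, Finset.card_erase_of_mem hγU, h3] at h4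
  exact ⟨c', hc', Or.inl (by omega)⟩

theorem exists_injective_of_card_le_card_biUnion {ι α : Type*} [Fintype ι] [DecidableEq α]
    (t : ι → Finset α) (ht : ∀ i, Fintype.card ι - 1 ≤ (t i).card)
    (hunion : Fintype.card ι ≤ (Finset.univ.biUnion t).card) :
    ∃ g : ι → α, Function.Injective g ∧ ∀ i, g i ∈ t i := by
  rw [← Finset.all_card_le_biUnion_card_iff_exists_injective]
  intro s
  rcases s.eq_empty_or_nonempty with rfl | ⟨i, hi⟩
  · simp
  by_cases hs : s = Finset.univ
  · subst hs
    simpa using hunion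
  · have := (Finset.card_lt_iff_ne_univ s).mpr hs
    calc s.card ≤ Fintype.card ι - 1 := by omega
      _ ≤ (t i).card := ht i
      _ ≤ (s.biUnion t).card := Finset.card_le_card (Finset.subset_biUnion_of_mem t hi)

theorem IsStrongListColoringOn.exists_extension (hc : IsStrongListColoringOn G L E c)
    (D : Finset (Sym2 V)) (hDE : ∀ d ∈ D, d ∉ E)
    (hfree : ∀ d ∈ D, D.card - 1 ≤ (freeColors G L E c d).card)
    (hunion : D.card ≤ (D.biUnion (freeColors G L E c)).card) :
    ∃ c', IsStrongListColoringOn G L (E ∪ ↑D) c' := by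
  obtain ⟨g, hg, hgfree⟩ := exists_injective_of_card_le_card_biUnion
    (fun d : D => freeColors G L E c d) (fun d => by simpa using hfree d d.2)
    (by simpa [Finset.univ_eq_attach, Finset.attach_biUnion] using hunion)
  set c' := Function.extend (Subtype.val : D → Sym2 V) g c
  have hc'D : ∀ d : D, c' d = g d := Subtype.val_injective.extend_apply g c
  have hc'E : ∀ f ∈ E, c' f = c f := fun f hf =>
    Function.extend_apply' g c f fun h => by
      obtain ⟨d, rfl⟩ := h
      exact hDE d d.2 hf
  refine ⟨c', fun f hf => ?_, fun f hf f' hf' hff' => ?_⟩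
  · rcases hf with hf | hf
    · rw [hc'E f hf]
      exact hc.1 f hf
    · rw [hc'D ⟨f, hf⟩]
      exact (mem_freeColors.mp (hgfree ⟨f, hf⟩)).1
  · rcases hf with hf | hf <;> rcases hf' with hf' | hf'
    · rw [hc'E f hf, hc'E f' hf']
      exact hc.2 f hf f' hf' hff'
    · rw [hc'E f hf, hc'D ⟨f', hf'⟩]
      exact (mem_freeColors.mp (hgfree ⟨f', hf'⟩)).2 f ⟨hf, hff'.symm⟩
    · rw [hc'D ⟨f, hf⟩, hc'E f' hf']
      exact ((mem_freeColors.mp (hgfree ⟨f, hf⟩)).2 f' ⟨hf', hff'⟩).symm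
    · rw [hc'D ⟨f, hf⟩, hc'D ⟨f', hf'⟩]
      exact hg.ne fun h => hff'.1 (congrArg Subtype.val h)

end ListColoring

theorem StrongConflict.of_map {W : Type*} {H : SimpleGraph W} {G : SimpleGraph V} (φ : H ↪g G)
    {e f : Sym2 W} (h : StrongConflict G (e.map φ) (f.map φ)) : StrongConflict H e f := by
  obtain ⟨hne, ⟨a, hae, haf⟩ | ⟨a, b, hae, hbf, hab⟩⟩ := h
  · refine ⟨fun hef => hne (hef ▸ rfl), Or.inl ?_⟩
    obtain ⟨a', ha'e, rfl⟩ := Sym2.mem_map.mp hae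
    obtain ⟨a'', ha''f, h⟩ := Sym2.mem_map.mp haf
    exact ⟨a', ha'e, φ.injective h ▸ ha''f⟩
  · refine ⟨fun hef => hne (hef ▸ rfl), Or.inr ?_⟩
    obtain ⟨a', ha'e, rfl⟩ := Sym2.mem_map.mp hae
    obtain ⟨b', hb'f, rfl⟩ := Sym2.mem_map.mp hbf
    exact ⟨a', b', ha'e, hb'f, φ.map_adj_iff.mp hab⟩

theorem StrongEdgeChoosable.exists_coloring_of_induce {G : SimpleGraph V} {S : Set V} {k : ℕ}
    (hS : StrongEdgeChoosable (G.induce S) k) {L : Sym2 V → Finset ℕ}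
    (hL : ∀ e ∈ G.edgeSet, k ≤ (L e).card) :
    ∃ c, IsStrongListColoringOn G L {f ∈ G.edgeSet | ∀ a ∈ f, a ∈ S} c := by
  set φ := SimpleGraph.Embedding.induce (G := G) S
  have hmap : Function.Injective (Sym2.map φ) := Sym2.map.injective φ.injective
  obtain ⟨c₀, hc₀L, hc₀⟩ := hS (fun e => L (e.map φ)) fun e he =>
    hL _ (φ.map_mem_edgeSet_iff.mpr he)
  have hlift : ∀ f ∈ {f ∈ G.edgeSet | ∀ a ∈ f, a ∈ S},
      ∃ e ∈ (G.induce S).edgeSet, e.map φ = f := by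
    rintro f ⟨hf, hfS⟩
    induction f using Sym2.ind with
    | _ p q =>
      refine ⟨s(⟨p, hfS p (Sym2.mem_mk_left p q)⟩, ⟨q, hfS q (Sym2.mem_mk_right p q)⟩), ?_, rfl⟩
      exact φ.map_mem_edgeSet_iff.mp hf
  refine ⟨Function.extend (Sym2.map φ) c₀ 0, fun f hf => ?_, fun f hf f' hf' hff' => ?_⟩
  · obtain ⟨e, he, rfl⟩ := hlift f hf
    rw [hmap.extend_apply]
    exact hc₀L e he
  · obtain ⟨e, he, rfl⟩ := hlift f hf
    obtain ⟨e', he', rfl⟩ := hlift f' hf'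
    rw [hmap.extend_apply, hmap.extend_apply]
    exact hc₀ e he e' he' (hff'.of_map φ)

section Ncard

variable {α : Type*}

theorem ncard_pair_le (p q : α) : ({p, q} : Set α).ncard ≤ 2 :=
  (Set.ncard_insert_le p {q}).trans (by rw [Set.ncard_singleton])

theorem ncard_triple_le (p q s : α) : ({p, q, s} : Set α).ncard ≤ 3 :=
  (Set.ncard_insert_le p {q, s}).trans (by have := ncard_pair_le q s; omega)

theorem ne_of_ncard_triple_eq_three {p q s : α} (h : ({p, q, s} : Set α).ncard = 3) :
    p ≠ q ∧ p ≠ s ∧ q ≠ s := by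
  refine ⟨?_, ?_, ?_⟩ <;> rintro rfl <;> simp at h
  · linarith [ncard_pair_le p s]
  · linarith [ncard_pair_le q p]
  · linarith [ncard_pair_le p q]

theorem exists_subset_insert_of_ncard_le [Finite α] {s r : Set α} (hrs : r ⊆ s)
    (h : s.ncard ≤ r.ncard + 1) (x : α) : ∃ z, s ⊆ insert z r := by
  have hsub : (s \ r).Subsingleton :=
    Set.ncard_le_one_iff_subsingleton.mp (by rw [Set.ncard_sdiff hrs]; omega)
  by_cases hne : (s \ r).Nonempty
  · obtain ⟨z, hz⟩ := hne
    refine ⟨z, fun c hc => ?_⟩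
    by_cases hcr : c ∈ r
    · exact Or.inr hcr
    · exact Or.inl (hsub ⟨hc, hcr⟩ hz)
  · exact ⟨x, fun c hc => Or.inr (by_contra fun hcr => hne ⟨c, hc, hcr⟩)⟩

end Ncard

structure IsTwoThreeBipartite (G : SimpleGraph V) (A B : Set V) : Prop where
  mem_or_mem : ∀ v, v ∈ A ∨ v ∈ B
  disjoint : Disjoint A B
  adj : ∀ a b, G.Adj a b → (a ∈ A ∧ b ∈ B) ∨ (a ∈ B ∧ b ∈ A)
  ncard_le_two : ∀ v ∈ A, (G.neighborSet v).ncard ≤ 2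
  ncard_le_three : ∀ v ∈ B, (G.neighborSet v).ncard ≤ 3

namespace IsTwoThreeBipartite

variable {G : SimpleGraph V} {A B : Set V}

theorem ncard_neighborSet_le (hG : IsTwoThreeBipartite G A B) (a : V) :
    (G.neighborSet a).ncard ≤ 3 :=
  (hG.mem_or_mem a).elim (fun h => (hG.ncard_le_two a h).trans (by norm_num))
    (hG.ncard_le_three a)

theorem mem_iff_notMem_of_adj (hG : IsTwoThreeBipartite G A B) {a b : V} (h : G.Adj a b) :
    a ∈ A ↔ b ∉ A := by
  have hAB := Set.disjoint_left.mp hG.disjoint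
  rcases hG.adj a b h with ⟨ha, hb⟩ | ⟨ha, hb⟩
  · exact iff_of_true ha fun hbA => hAB hbA hb
  · exact iff_of_false (fun haA => hAB haA ha) (not_not.mpr hb)

theorem not_adj_of_adj_of_adj (hG : IsTwoThreeBipartite G A B) {u a b : V} (ha : G.Adj u a)
    (hb : G.Adj u b) : ¬ G.Adj a b := fun hab => by
  have := hG.mem_iff_notMem_of_adj ha
  have := hG.mem_iff_notMem_of_adj hb
  have := hG.mem_iff_notMem_of_adj hab
  tauto

end IsTwoThreeBipartite

section FourCycle

variable {G : SimpleGraph V} {A B : Set V} {u w a b : V}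

def edgesAvoiding (G : SimpleGraph V) (u w : V) : Set (Sym2 V) :=
  {f ∈ G.edgeSet | u ∉ f ∧ w ∉ f}

theorem adj_of_neighborSet_eq_pair {r : V} (hNr : G.neighborSet r = {a, b}) :
    G.Adj r a ∧ G.Adj r b := by
  simp [← SimpleGraph.mem_neighborSet, hNr]

theorem neighborSet_eq_pair [Finite V] {r : V} (h : (G.neighborSet r).ncard ≤ 2)
    (ha : G.Adj r a) (hb : G.Adj r b) (hab : a ≠ b) : G.neighborSet r = {a, b} :=
  (Set.eq_of_subset_of_ncard_le (Set.insert_subset_iff.mpr ⟨ha, Set.singleton_subset_iff.mpr hb⟩)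
    (by rw [Set.ncard_pair hab]; exact h)).symm

theorem eq_of_mem_edgesAvoiding {z : V} {f : Sym2 V} (hf : f ∈ edgesAvoiding G u w) (ha : a ∈ f)
    (hNa : G.neighborSet a ⊆ {z, u, w}) : f = s(a, z) := by
  obtain ⟨d, rfl⟩ := Sym2.mem_iff_exists.mp ha
  obtain ⟨hadj, hu, hw⟩ := hf
  rcases hNa hadj with rfl | rfl | rfl
  · rfl
  · exact absurd (Sym2.mem_mk_right _ _) hu
  · exact absurd (Sym2.mem_mk_right _ _) hw

theorem eq_or_eq_of_mem_edgeSet {z t : V} {f : Sym2 V} (hf : f ∈ G.edgeSet) (hz : z ∈ f)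
    (hNz : G.neighborSet z ⊆ {t, a}) : f = s(z, t) ∨ f = s(z, a) := by
  obtain ⟨d, rfl⟩ := Sym2.mem_iff_exists.mp hz
  rcases hNz hf with rfl | rfl
  · exact Or.inl rfl
  · exact Or.inr rfl

/-- When `a` has no neighbour outside `{u, w}`, the witnesses are the dummies `z := u`, `t := b`. -/
theorem IsTwoThreeBipartite.exists_neighborSet_subset [Finite V] (hG : IsTwoThreeBipartite G A B)
    (huw : u ≠ w) (hNu : G.neighborSet u = {a, b}) (hwa : G.Adj w a) :
    ∃ z t, G.neighborSet a ⊆ {z, u, w} ∧ G.neighborSet z ⊆ {t, a} := by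
  have hua := (adj_of_neighborSet_eq_pair hNu).1
  obtain ⟨z, hz⟩ := exists_subset_insert_of_ncard_le (r := {u, w}) (s := G.neighborSet a)
    (Set.insert_subset_iff.mpr ⟨hua.symm, Set.singleton_subset_iff.mpr hwa.symm⟩)
    (by rw [Set.ncard_pair huw]; exact hG.ncard_neighborSet_le a) u
  by_cases hza : G.Adj a z ∧ z ≠ u ∧ z ≠ w
  · have haA : a ∉ A := fun haA => by
      have := hG.ncard_le_two a haA
      have := (Set.two_lt_ncard (s := G.neighborSet a) (Set.toFinite _)).mpr
        ⟨u, hua.symm, w, hwa.symm, z, hza.1, huw, hza.2.1.symm, hza.2.2.symm⟩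
      omega
    have hzA : z ∈ A := by
      have := hG.mem_iff_notMem_of_adj hza.1
      tauto
    obtain ⟨t, ht⟩ := exists_subset_insert_of_ncard_le (r := {a}) (s := G.neighborSet z)
      (Set.singleton_subset_iff.mpr hza.1.symm)
      (by rw [Set.ncard_singleton]; exact hG.ncard_le_two z hzA) a
    exact ⟨z, t, hz, ht⟩
  · refine ⟨u, b, fun c hc => ?_, by rw [hNu, Set.pair_comm]⟩
    rcases hz hc with rfl | hc'
    · by_cases hcu : c = u
      · exact Or.inl hcu
      · exact Or.inr (Or.inr (by_contra fun hcw => hza ⟨hc, hcu, hcw⟩))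
    · exact Or.inr hc'

theorem conflictsIn_edgesAvoiding_subset {r z t y : V} (hNr : G.neighborSet r = {a, b})
    (hNa : G.neighborSet a ⊆ {z, u, w}) (hNz : G.neighborSet z ⊆ {t, a})
    (hNb : G.neighborSet b ⊆ {y, u, w}) :
    conflictsIn G (edgesAvoiding G u w) s(r, a) ⊆ {s(a, z), s(b, y), s(z, t)} := by
  rintro f ⟨hf, hconf⟩
  obtain ⟨c, hcf, hc⟩ := hconf.exists_adj (adj_of_neighborSet_eq_pair hNr).1
  have hc : c = a ∨ c = b ∨ c = z := by
    rcases hc with hc | hc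
    · rw [← SimpleGraph.mem_neighborSet, hNr] at hc
      rcases hc with rfl | rfl <;> simp
    · rcases hNa hc with rfl | rfl | rfl
      · simp
      · exact absurd hcf hf.2.1
      · exact absurd hcf hf.2.2
  rcases hc with rfl | rfl | rfl
  · simp [eq_of_mem_edgesAvoiding hf hcf hNa]
  · simp [eq_of_mem_edgesAvoiding hf hcf hNb]
  · rcases eq_or_eq_of_mem_edgeSet hf.1 hcf hNz with rfl | rfl
    · simp
    · simp [Sym2.eq_swap]

theorem conflictsIn_edgesAvoiding_pendant_subset {z t : V} (haz : G.Adj a z)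
    (hNa : G.neighborSet a ⊆ {z, u, w}) (hNz : G.neighborSet z ⊆ {t, a}) :
    conflictsIn G (edgesAvoiding G u w) s(a, z) ⊆ (fun d => s(t, d)) '' G.neighborSet t := by
  rintro f ⟨hf, hconf⟩
  have hfaz : f ≠ s(a, z) := hconf.1.symm
  have hzf : z ∈ f → t ∈ f := fun hzf => by
    rcases eq_or_eq_of_mem_edgeSet hf.1 hzf hNz with rfl | rfl
    · exact Sym2.mem_mk_right _ _
    · exact absurd Sym2.eq_swap hfaz
  have htf : t ∈ f := by
    obtain ⟨c, hcf, hc | hc⟩ := hconf.exists_adj haz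
    · rcases hNa hc with rfl | rfl | rfl
      · exact hzf hcf
      · exact absurd hcf hf.2.1
      · exact absurd hcf hf.2.2
    · rcases hNz hc with rfl | rfl
      · exact hcf
      · exact absurd (eq_of_mem_edgesAvoiding hf hcf hNa) hfaz
  obtain ⟨d, rfl⟩ := Sym2.mem_iff_exists.mp htf
  exact ⟨d, hf.1, rfl⟩

theorem IsTwoThreeBipartite.ncard_conflictsIn_le_three [Finite V]
    (hG : IsTwoThreeBipartite G A B) (huw : u ≠ w) (hNu : G.neighborSet u = {a, b})
    (hNw : G.neighborSet w = {a, b}) {r : V} (hNr : G.neighborSet r = {a, b}) :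
    (conflictsIn G (edgesAvoiding G u w) s(r, a)).ncard ≤ 3 := by
  obtain ⟨z, t, hNa, hNz⟩ :=
    hG.exists_neighborSet_subset huw hNu (adj_of_neighborSet_eq_pair hNw).1
  obtain ⟨y, -, hNb, -⟩ := hG.exists_neighborSet_subset huw (hNu.trans (Set.pair_comm a b))
    (adj_of_neighborSet_eq_pair hNw).2
  exact (Set.ncard_le_ncard (conflictsIn_edgesAvoiding_subset hNr hNa hNz hNb)).trans
    (ncard_triple_le _ _ _)

theorem IsTwoThreeBipartite.three_le_card_freeColors_pendant [Finite V]
    (hG : IsTwoThreeBipartite G A B) {L : Sym2 V → Finset ℕ}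
    (hL : ∀ e ∈ G.edgeSet, 6 ≤ (L e).card) (c : Sym2 V → ℕ) {z t : V}
    (haz : G.Adj a z) (hNa : G.neighborSet a ⊆ {z, u, w}) (hNz : G.neighborSet z ⊆ {t, a}) :
    3 ≤ (freeColors G L (edgesAvoiding G u w) c s(a, z)).card := by
  have := card_le_card_freeColors_add (G := G) (L := L) (E := edgesAvoiding G u w) (c := c)
    (e := s(a, z))
  have := (Set.ncard_le_ncard (conflictsIn_edgesAvoiding_pendant_subset haz hNa hNz)).trans
    Set.ncard_image_le
  have := hG.ncard_neighborSet_le t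
  have := hL s(a, z) haz
  omega

end FourCycle

section FourCycleColoring

variable {G : SimpleGraph V} {A B : Set V} {u w a b : V} {L : Sym2 V → Finset ℕ}
  {c : Sym2 V → ℕ}

/-- A conflict would close a 3-cycle `u a b` or a 5-cycle `u a z y b`. -/
theorem IsTwoThreeBipartite.not_strongConflict (hG : IsTwoThreeBipartite G A B)
    (hua : G.Adj u a) (hub : G.Adj u b) {y z : V} (hyz : y ≠ z)
    (haz : s(a, z) ∈ edgesAvoiding G u w) (hby : s(b, y) ∈ edgesAvoiding G u w)
    (hNa : G.neighborSet a ⊆ {z, u, w}) (hNb : G.neighborSet b ⊆ {y, u, w}) :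
    ¬ StrongConflict G s(b, y) s(a, z) := fun h => by
  obtain ⟨hazE, hazu, hazw⟩ : G.Adj a z ∧ u ∉ s(a, z) ∧ w ∉ s(a, z) := haz
  obtain ⟨hbyE, hbyu, hbyw⟩ : G.Adj b y ∧ u ∉ s(b, y) ∧ w ∉ s(b, y) := hby
  obtain ⟨d, hd, hadj⟩ := h.symm.exists_adj hazE
  rcases Sym2.mem_iff.mp hd with rfl | rfl
  · rcases hadj with h | h
    · exact hG.not_adj_of_adj_of_adj hua hub h
    · rcases hNb h.symm with h | h | h
      · exact hyz h.symm
      · exact hazu (h ▸ Sym2.mem_mk_right a z)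
      · exact hazw (h ▸ Sym2.mem_mk_right a z)
  · rcases hadj with h | h
    · rcases hNa h with h | h | h
      · exact hyz h
      · exact hbyu (h ▸ Sym2.mem_mk_right b d)
      · exact hbyw (h ▸ Sym2.mem_mk_right b d)
    · have := hG.mem_iff_notMem_of_adj hazE
      have := hG.mem_iff_notMem_of_adj hua
      have := hG.mem_iff_notMem_of_adj hub
      have := hG.mem_iff_notMem_of_adj hbyE
      have := hG.mem_iff_notMem_of_adj h
      tauto

theorem IsTwoThreeBipartite.exists_recoloring [Finite V] [DecidableEq V]
    (hG : IsTwoThreeBipartite G A B) (huw : u ≠ w) (hab : a ≠ b)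
    (hNu : G.neighborSet u = {a, b}) (hNw : G.neighborSet w = {a, b})
    (hL : ∀ e ∈ G.edgeSet, 6 ≤ (L e).card)
    (hc : IsStrongListColoringOn G L (edgesAvoiding G u w) c)
    (hU : freeColors G L (edgesAvoiding G u w) c s(u, a) =
      freeColors G L (edgesAvoiding G u w) c s(u, b))
    (h3 : (freeColors G L (edgesAvoiding G u w) c s(u, a)).card = 3) :
    ∃ c', IsStrongListColoringOn G L (edgesAvoiding G u w) c' ∧
      (4 ≤ (freeColors G L (edgesAvoiding G u w) c' s(u, a)).card ∨
        4 ≤ (freeColors G L (edgesAvoiding G u w) c' s(u, b)).card) := by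
  obtain ⟨hua, hub⟩ := adj_of_neighborSet_eq_pair hNu
  have hNu' : G.neighborSet u = {b, a} := hNu.trans (Set.pair_comm a b)
  obtain ⟨z, t, hNa, hNz⟩ :=
    hG.exists_neighborSet_subset huw hNu (adj_of_neighborSet_eq_pair hNw).1
  obtain ⟨y, t', hNb, hNy⟩ :=
    hG.exists_neighborSet_subset huw hNu' (adj_of_neighborSet_eq_pair hNw).2
  have hCa := conflictsIn_edgesAvoiding_subset hNu hNa hNz hNb
  have hCb := conflictsIn_edgesAvoiding_subset hNu' hNb hNy hNa
  obtain ⟨hCa3, hinja, hLa⟩ := injOn_of_card_freeColors (c := c) (L := L) (k := 3)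
    ((Set.ncard_le_ncard hCa).trans (ncard_triple_le _ _ _)) (by rw [h3]; exact hL _ hua)
  obtain ⟨hCb3, hinjb, hLb⟩ := injOn_of_card_freeColors (c := c) (L := L) (k := 3)
    ((Set.ncard_le_ncard hCb).trans (ncard_triple_le _ _ _)) (by rw [← hU, h3]; exact hL _ hub)
  have hCa_eq := Set.eq_of_subset_of_ncard_le hCa (by rw [hCa3]; exact ncard_triple_le _ _ _)
  have hCb_eq := Set.eq_of_subset_of_ncard_le hCb (by rw [hCb3]; exact ncard_triple_le _ _ _)
  obtain ⟨hne, -, hbyzt⟩ := ne_of_ncard_triple_eq_three (hCa_eq ▸ hCa3)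
  have haz : s(a, z) ∈ conflictsIn G (edgesAvoiding G u w) s(u, a) := hCa_eq ▸ by simp
  have hby : s(b, y) ∈ conflictsIn G (edgesAvoiding G u w) s(u, a) := hCa_eq ▸ by simp
  have hby' : s(b, y) ∈ conflictsIn G (edgesAvoiding G u w) s(u, b) := hCb_eq ▸ by simp
  have hyz : y ≠ z := by
    rintro rfl
    have hbt : b = t := (hNz (hby.1.1.symm : G.Adj y b)).resolve_right fun h => hab h.symm
    exact hbyzt (by rw [← hbt, Sym2.eq_swap])
  exact hc.exists_four_le_card_freeColors hU h3 haz hby hby' hne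
    (hG.not_strongConflict hua hub hyz haz.1 hby.1 hNa hNb) hinja hLa hinjb hLb
    (hG.three_le_card_freeColors_pendant hL c haz.1.1 hNa hNz)
    (hG.three_le_card_freeColors_pendant hL c hby.1.1 hNb hNy)

theorem edgeSet_subset_edgesAvoiding_union (hNu : G.neighborSet u = {a, b})
    (hNw : G.neighborSet w = {a, b}) [DecidableEq V] :
    G.edgeSet ⊆
      edgesAvoiding G u w ∪ ↑({s(u, a), s(u, b), s(w, a), s(w, b)} : Finset (Sym2 V)) := by
  intro f hf
  by_cases hu : u ∈ f
  · obtain ⟨d, rfl⟩ := Sym2.mem_iff_exists.mp hu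
    have hd : d ∈ G.neighborSet u := hf
    rw [hNu] at hd
    rcases hd with rfl | rfl <;> simp
  by_cases hw : w ∈ f
  · obtain ⟨d, rfl⟩ := Sym2.mem_iff_exists.mp hw
    have hd : d ∈ G.neighborSet w := hf
    rw [hNw] at hd
    rcases hd with rfl | rfl <;> simp
  exact Or.inl ⟨hf, hu, hw⟩

theorem IsTwoThreeBipartite.three_le_card_freeColors_of_mem [Finite V] [DecidableEq V]
    (hG : IsTwoThreeBipartite G A B) (huw : u ≠ w) (hNu : G.neighborSet u = {a, b})
    (hNw : G.neighborSet w = {a, b}) (hL : ∀ e ∈ G.edgeSet, 6 ≤ (L e).card) (c : Sym2 V → ℕ)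
    {d : Sym2 V} (hd : d ∈ ({s(u, a), s(u, b), s(w, a), s(w, b)} : Finset (Sym2 V))) :
    3 ≤ (freeColors G L (edgesAvoiding G u w) c d).card := by
  have hNu' := hNu.trans (Set.pair_comm a b)
  have hNw' := hNw.trans (Set.pair_comm a b)
  have hd : d ∈ G.edgeSet ∧ (conflictsIn G (edgesAvoiding G u w) d).ncard ≤ 3 := by
    simp only [Finset.mem_insert, Finset.mem_singleton] at hd
    rcases hd with rfl | rfl | rfl | rfl
    · exact ⟨(adj_of_neighborSet_eq_pair hNu).1, hG.ncard_conflictsIn_le_three huw hNu hNw hNu⟩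
    · exact ⟨(adj_of_neighborSet_eq_pair hNu).2, hG.ncard_conflictsIn_le_three huw hNu' hNw' hNu'⟩
    · exact ⟨(adj_of_neighborSet_eq_pair hNw).1, hG.ncard_conflictsIn_le_three huw hNu hNw hNw⟩
    · exact ⟨(adj_of_neighborSet_eq_pair hNw).2, hG.ncard_conflictsIn_le_three huw hNu' hNw' hNw'⟩
  have := card_le_card_freeColors_add (G := G) (L := L) (E := edgesAvoiding G u w) (c := c) (e := d)
  have := hL d hd.1
  omega

theorem IsTwoThreeBipartite.exists_strongListColoring [Finite V] [DecidableEq V]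
    (hG : IsTwoThreeBipartite G A B) (huw : u ≠ w) (hab : a ≠ b)
    (hNu : G.neighborSet u = {a, b}) (hNw : G.neighborSet w = {a, b})
    (hL : ∀ e ∈ G.edgeSet, 6 ≤ (L e).card)
    (hc : IsStrongListColoringOn G L (edgesAvoiding G u w) c) :
    ∃ c', IsStrongListColoringOn G L G.edgeSet c' := by
  set E₀ := edgesAvoiding G u w
  set D : Finset (Sym2 V) := {s(u, a), s(u, b), s(w, a), s(w, b)}
  have hDE : ∀ d ∈ D, d ∉ E₀ := by
    intro d hd hdE
    simp only [D, Finset.mem_insert, Finset.mem_singleton] at hd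
    rcases hd with rfl | rfl | rfl | rfl <;> simp [E₀, edgesAvoiding] at hdE
  have hfree : ∀ c, ∀ d ∈ D, 3 ≤ (freeColors G L E₀ c d).card := fun c _ hd =>
    hG.three_le_card_freeColors_of_mem huw hNu hNw hL c hd
  suffices ∃ c, IsStrongListColoringOn G L E₀ c ∧ 4 ≤ (D.biUnion (freeColors G L E₀ c)).card by
    obtain ⟨c, hc, h4⟩ := this
    obtain ⟨c', hc'⟩ := hc.exists_extension D hDE
      (fun d hd => by have := hfree c d hd; have : D.card ≤ 4 := Finset.card_le_four; omega)
      (Finset.card_le_four.trans h4)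
    exact ⟨c', hc'.mono (edgeSet_subset_edgesAvoiding_union hNu hNw)⟩
  by_contra! hbad
  have hU : ∀ d ∈ D, freeColors G L E₀ c d = D.biUnion (freeColors G L E₀ c) := fun d hd =>
    Finset.eq_of_subset_of_card_le (Finset.subset_biUnion_of_mem _ hd)
      (by have := hbad c hc; have := hfree c d hd; omega)
  have hua : s(u, a) ∈ D := by simp [D]
  have hub : s(u, b) ∈ D := by simp [D]
  obtain ⟨c', hc', h4⟩ := hG.exists_recoloring huw hab hNu hNw hL hc
    ((hU _ hua).trans (hU _ hub).symm)
    (by have := hbad c hc; have := hfree c _ hua; rw [hU _ hua] at this ⊢; omega)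
  have := hbad c' hc'
  rcases h4 with h4 | h4
  · have h4' : 4 ≤ (freeColors G L E₀ c' s(u, a)).card := h4
    have := Finset.card_le_card (Finset.subset_biUnion_of_mem (freeColors G L E₀ c') hua)
    omega
  · have h4' : 4 ≤ (freeColors G L E₀ c' s(u, b)).card := h4
    have := Finset.card_le_card (Finset.subset_biUnion_of_mem (freeColors G L E₀ c') hub)
    omega

end FourCycleColoring

end

/-- A minimal counterexample contains no 4-cycle: if a (2,3)-bipartite graph `G`
contains a 4-cycle `u v w x` with `u, w` of degree at most 2, and every proper
induced subgraph of `G` is strongly 6-edge-choosable, then so is `G`. -/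
theorem no_four_cycle_in_minimal_counterexample
    {V : Type*} [Fintype V] (G : SimpleGraph V) (A B : Set V)
    (hpart : ∀ v, v ∈ A ∨ v ∈ B) (hdisj : Disjoint A B)
    (hbip : ∀ a b, G.Adj a b → (a ∈ A ∧ b ∈ B) ∨ (a ∈ B ∧ b ∈ A))
    (hA : ∀ v ∈ A, (G.neighborSet v).ncard ≤ 2)
    (hB : ∀ v ∈ B, (G.neighborSet v).ncard ≤ 3)
    (u v w x : V)
    (hdist : u ≠ v ∧ u ≠ w ∧ u ≠ x ∧ v ≠ w ∧ v ≠ x ∧ w ≠ x)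
    (huv : G.Adj u v) (hvw : G.Adj v w) (hwx : G.Adj w x) (hxu : G.Adj x u)
    (hdu : (G.neighborSet u).ncard ≤ 2) (hdw : (G.neighborSet w).ncard ≤ 2)
    (hmin : ∀ S : Set V, S ≠ Set.univ → StrongEdgeChoosable (G.induce S) 6) :
    StrongEdgeChoosable G 6 := by
  classical
  have hG : IsTwoThreeBipartite G A B := ⟨hpart, hdisj, hbip, hA, hB⟩
  obtain ⟨-, huw, -, -, hvx, -⟩ := hdist
  have hNu : G.neighborSet u = {v, x} := neighborSet_eq_pair hdu huv hxu.symm hvx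
  have hNw : G.neighborSet w = {v, x} := neighborSet_eq_pair hdw hvw.symm hwx hvx
  intro L hL
  have hS : ({u, w}ᶜ : Set V) ≠ Set.univ := (Set.ne_univ_iff_exists_notMem _).mpr ⟨u, by simp⟩
  obtain ⟨c, hc⟩ := (hmin _ hS).exists_coloring_of_induce hL
  refine hG.exists_strongListColoring huw hvx hNu hNw hL (hc.mono ?_)
  rintro f ⟨hf, hfu, hfw⟩
  exact ⟨hf, fun a ha h => by rcases h with rfl | rfl; exacts [hfu ha, hfw ha]⟩
end

section
/- Let the 6 edges of a 4-cycle u–v–w–x–u together with pendant edges vv' and xx' (in a (2,3)-bipartite graph where u,w have degree 2) be given lists with |L(vv')| ≥ 3, |L(xx')| ≥ 3, |L(uv)|, |L(vw)|, |L(wx)|, |L(xu)| ≥ 5, where any two of these six edges conflict (are adjacent or joined by an edge) except the pair vv', xx'. Then there is a strong edge-coloring of these 6 edges from the lists. -/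
/-!
Colour the two pendant edges first and the 4-cycle greedily afterwards, in the order
`uv, vw, xu, wx`: the first three edges see at most four used colours each and have five
available, so the only delicate edge is `wx`, which must avoid `p, q, a, b, d`. It succeeds as
soon as `L(wx)` retains four colours after removing `p` and `q`. This can be arranged: give both
pendant edges the same colour if their lists meet; otherwise their lists together carry six
colours, so either one of them is missing from `L(wx)` or `|L(wx)| ≥ 6`.
-/

open Finset

variable {α : Type*} [DecidableEq α]

theorem four_le_card_sdiff_singleton {W : Finset α} (hW : 5 ≤ #W) (x : α) :
    4 ≤ #(W \ {x}) := by
  have := le_card_sdiff {x} W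
  rw [card_singleton] at this
  omega

theorem exists_pendant_colors {P Q W : Finset α} (hP : 3 ≤ #P) (hQ : 3 ≤ #Q) (hW : 5 ≤ #W) :
    ∃ p ∈ P, ∃ q ∈ Q, 4 ≤ #(W \ {p, q}) := by
  obtain ⟨p₀, hp₀⟩ := card_pos.1 (by omega : 0 < #P)
  obtain ⟨q₀, hq₀⟩ := card_pos.1 (by omega : 0 < #Q)
  by_cases hW6 : 6 ≤ #W
  · have := le_card_sdiff {p₀, q₀} W
    have := card_le_two (a := p₀) (b := q₀)
    exact ⟨p₀, hp₀, q₀, hq₀, by omega⟩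
  by_cases hPQ : Disjoint P Q
  · have hlt : #W < #(P ∪ Q) := by rw [card_union_of_disjoint hPQ]; omega
    obtain ⟨z, hz, hzW⟩ := exists_mem_notMem_of_card_lt_card hlt
    rcases mem_union.1 hz with hzP | hzQ
    · refine ⟨z, hzP, q₀, hq₀, ?_⟩
      rw [sdiff_insert_of_notMem hzW]
      exact four_le_card_sdiff_singleton hW q₀
    · refine ⟨p₀, hp₀, z, hzQ, ?_⟩
      rw [pair_comm, sdiff_insert_of_notMem hzW]
      exact four_le_card_sdiff_singleton hW p₀
  · obtain ⟨r, hrP, hrQ⟩ := not_disjoint_iff.1 hPQ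
    refine ⟨r, hrP, r, hrQ, ?_⟩
    rw [pair_eq_singleton]
    exact four_le_card_sdiff_singleton hW r

theorem exists_cycle_colors_avoiding (p q : α) {Luv Lvw Lwx Lxu : Finset α}
    (huv : 5 ≤ #Luv) (hvw : 5 ≤ #Lvw) (hxu : 5 ≤ #Lxu) (hwx : 4 ≤ #(Lwx \ {p, q})) :
    ∃ a ∈ Luv, ∃ b ∈ Lvw, ∃ c ∈ Lwx, ∃ d ∈ Lxu,
      a ≠ b ∧ a ≠ c ∧ a ≠ d ∧ b ≠ c ∧ b ≠ d ∧ c ≠ d ∧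
      p ≠ a ∧ p ≠ b ∧ p ≠ c ∧ p ≠ d ∧
      q ≠ a ∧ q ≠ b ∧ q ≠ c ∧ q ≠ d := by
  obtain ⟨a, ha, ha'⟩ := exists_mem_notMem_of_card_lt_card
    ((card_le_two (a := p) (b := q)).trans_lt (by omega) : _ < #Luv)
  obtain ⟨b, hb, hb'⟩ := exists_mem_notMem_of_card_lt_card
    ((card_le_three (a := p) (b := q) (c := a)).trans_lt (by omega) : _ < #Lvw)
  obtain ⟨d, hd, hd'⟩ := exists_mem_notMem_of_card_lt_card
    ((card_le_four (a := p) (b := q) (c := a) (d := b)).trans_lt (by omega) : _ < #Lxu)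
  obtain ⟨c, hc, hc'⟩ := exists_mem_notMem_of_card_lt_card
    ((card_le_three (a := a) (b := b) (c := d)).trans_lt (by omega) : _ < #(Lwx \ {p, q}))
  simp only [mem_sdiff, mem_insert, mem_singleton, not_or] at ha' hb' hd' hc hc'
  exact ⟨a, ha, b, hb, c, hc.1, d, hd, by grind⟩

/-- The 4-cycle `u-v-w-x-u` with pendant edges `vv'` and `xx'`: every pair of
the six edges conflicts for strong edge-coloring except the pair `{vv', xx'}`.
Given the stated list sizes, a strong edge-coloring from the lists exists. -/
theorem four_cycle_configuration_colorable
    (Lvv' Lxx' Luv Lvw Lwx Lxu : Finset ℕ)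
    (hvv' : 3 ≤ Lvv'.card) (hxx' : 3 ≤ Lxx'.card)
    (huv : 5 ≤ Luv.card) (hvw : 5 ≤ Lvw.card)
    (hwx : 5 ≤ Lwx.card) (hxu : 5 ≤ Lxu.card) :
    ∃ p ∈ Lvv', ∃ q ∈ Lxx', ∃ a ∈ Luv, ∃ b ∈ Lvw, ∃ c ∈ Lwx, ∃ d ∈ Lxu,
      a ≠ b ∧ a ≠ c ∧ a ≠ d ∧ b ≠ c ∧ b ≠ d ∧ c ≠ d ∧
      p ≠ a ∧ p ≠ b ∧ p ≠ c ∧ p ≠ d ∧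
      q ≠ a ∧ q ≠ b ∧ q ≠ c ∧ q ≠ d := by
  obtain ⟨p, hp, q, hq, hwx'⟩ := exists_pendant_colors hvv' hxx' hwx
  exact ⟨p, hp, q, hq, exists_cycle_colors_avoiding p q huv hvw hxu hwx'⟩
end

section
/- Let the 9 edges consisting of a 6-cycle u–v–w–x–y–z–u together with pendant edges uu', ww', yy' be given lists with |L(uu')|, |L(ww')|, |L(yy')| ≥ 3 and lists of size ≥ 5 on the six cycle edges, where the conflict relation is induced by strong edge-coloring in this graph (two edges conflict if adjacent or joined by a third edge). Then there is a choice of colors from the lists giving a strong edge-coloring of these 9 edges. -/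
/-!
Two cycle edges conflict unless they are opposite, so the conflict graph of the cycle edges is
the octahedron, the cocktail party graph on three pairs. Pendant edges do not conflict with each
other, so give them arbitrary colours; each cycle edge conflicts with exactly two of them and keeps
at least three colours. The cocktail party graph on `m` pairs is `m`-choosable
(Erdős–Rubin–Taylor): if the lists of some pair share a colour, give it to both vertices and
delete it from the other lists, leaving `m - 1` pairs; otherwise Hall's condition holds, because
any `m + 1` vertices contain a pair, whose disjoint lists already supply `2 m` colours.
-/

open Finset

section CocktailParty

variable {ι α : Type*} [Fintype ι] [DecidableEq α]

theorem exists_injective_listColoring_of_disjoint (L : ι × Bool → Finset α)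
    (hL : ∀ p, Fintype.card ι ≤ #(L p)) (hdisj : ∀ i, Disjoint (L (i, false)) (L (i, true))) :
    ∃ f : ι × Bool → α, Function.Injective f ∧ ∀ p, f p ∈ L p := by
  refine (all_card_le_biUnion_card_iff_exists_injective L).1 fun s => ?_
  by_cases hpair : ∃ i, (i, false) ∈ s ∧ (i, true) ∈ s
  · obtain ⟨i, hi₀, hi₁⟩ := hpair
    calc #s ≤ Fintype.card (ι × Bool) := card_le_univ s
      _ = Fintype.card ι + Fintype.card ι := by simp [Fintype.card_prod, mul_two]
      _ ≤ #(L (i, false)) + #(L (i, true)) := add_le_add (hL _) (hL _)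
      _ = #(L (i, false) ∪ L (i, true)) := (card_union_of_disjoint (hdisj i)).symm
      _ ≤ #(s.biUnion L) :=
        card_le_card (union_subset (subset_biUnion_of_mem L hi₀) (subset_biUnion_of_mem L hi₁))
  · obtain rfl | ⟨p, hp⟩ := s.eq_empty_or_nonempty
    · simp
    have hfst : Set.InjOn Prod.fst (s : Set (ι × Bool)) := by
      rintro ⟨i, b⟩ hb ⟨j, c⟩ hc (rfl : i = j)
      cases b <;> cases c <;> simp_all
    calc #s ≤ Fintype.card ι := card_le_card_of_injOn Prod.fst (fun _ _ => mem_univ _) hfst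
      _ ≤ #(L p) := hL p
      _ ≤ #(s.biUnion L) := card_le_card (subset_biUnion_of_mem L hp)

theorem exists_cocktailParty_listColoring (L : ι × Bool → Finset α)
    (hL : ∀ p, Fintype.card ι ≤ #(L p)) :
    ∃ f : ι × Bool → α, (∀ p, f p ∈ L p) ∧ ∀ p q, p.1 ≠ q.1 → f p ≠ f q := by
  classical
  induction hn : Fintype.card ι using Nat.strong_induction_on generalizing ι with
  | _ n ih =>
  by_cases hshared : ∃ i, ¬Disjoint (L (i, false)) (L (i, true))
  · obtain ⟨i, hi⟩ := hshared
    obtain ⟨x, hx₀, hx₁⟩ := not_disjoint_iff.1 hi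
    have hcard : Fintype.card {j // j ≠ i} = n - 1 := by
      rw [Fintype.card_subtype_compl, Fintype.card_subtype_eq, hn]
    have hpos : 0 < n := hn ▸ Fintype.card_pos_iff.2 ⟨i⟩
    obtain ⟨g, hgL, hgne⟩ := ih (n - 1) (by omega) (ι := {j // j ≠ i})
      (fun p => (L (p.1, p.2)).erase x)
      (fun p => hcard ▸ hn ▸ (Nat.sub_le_sub_right (hL _) 1).trans pred_card_le_card_erase) hcard
    refine ⟨fun p => if h : p.1 = i then x else g (⟨p.1, h⟩, p.2), fun ⟨j, b⟩ => ?_,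
      fun ⟨j, b⟩ ⟨k, c⟩ hjk => ?_⟩
    · by_cases hj : j = i
      · subst hj; cases b <;> simpa
      · simpa [hj] using mem_of_mem_erase (hgL (⟨j, hj⟩, b))
    · have hgx : ∀ q, g q ≠ x := fun q => ne_of_mem_erase (hgL q)
      dsimp only at hjk ⊢
      by_cases hj : j = i <;> by_cases hk : k = i
      · exact absurd (hj.trans hk.symm) hjk
      · simpa [hj, hk] using (hgx _).symm
      · simpa [hj, hk] using hgx _
      · simpa [hj, hk] using hgne _ _ (Subtype.coe_ne_coe.1 hjk)
  · push Not at hshared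
    obtain ⟨f, hinj, hf⟩ := exists_injective_listColoring_of_disjoint L (hn ▸ hL) hshared
    exact ⟨f, hf, fun p q hpq => hinj.ne (ne_of_apply_ne Prod.fst hpq)⟩

end CocktailParty

theorem le_card_sdiff_pair {α : Type*} [DecidableEq α] (s : Finset α) (x y : α) :
    #s - 2 ≤ #(s \ {x, y}) :=
  (Nat.sub_le_sub_left card_le_two _).trans (le_card_sdiff _ _)

/-- The 6-cycle `u-v-w-x-y-z-u` with pendant edges `uu'`, `ww'`, `yy'`.
Denoting the cycle edges `a = uv, b = vw, c = wx, d = xy, e = yz, f = zu`, the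
strong-coloring conflicts are: all pairs of cycle edges except the opposite
pairs `{a,d}, {b,e}, {c,f}`; `uu'` conflicts with `f, a, b, e`; `ww'` with
`a, b, c, d`; `yy'` with `c, d, e, f`; pendant edges do not conflict with each
other.  Given the stated list sizes, a coloring from the lists exists. -/
theorem six_cycle_configuration_colorable
    (Lu' Lw' Ly' La Lb Lc Ld Le Lf : Finset ℕ)
    (hu' : 3 ≤ Lu'.card) (hw' : 3 ≤ Lw'.card) (hy' : 3 ≤ Ly'.card)
    (ha : 5 ≤ La.card) (hb : 5 ≤ Lb.card) (hc : 5 ≤ Lc.card)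
    (hd : 5 ≤ Ld.card) (he : 5 ≤ Le.card) (hf : 5 ≤ Lf.card) :
    ∃ pu ∈ Lu', ∃ pw ∈ Lw', ∃ py ∈ Ly',
      ∃ a ∈ La, ∃ b ∈ Lb, ∃ c ∈ Lc, ∃ d ∈ Ld, ∃ e ∈ Le, ∃ f ∈ Lf,
      a ≠ b ∧ a ≠ c ∧ a ≠ e ∧ a ≠ f ∧
      b ≠ c ∧ b ≠ d ∧ b ≠ f ∧
      c ≠ d ∧ c ≠ e ∧ d ≠ e ∧ d ≠ f ∧ e ≠ f ∧
      pu ≠ f ∧ pu ≠ a ∧ pu ≠ b ∧ pu ≠ e ∧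
      pw ≠ a ∧ pw ≠ b ∧ pw ≠ c ∧ pw ≠ d ∧
      py ≠ c ∧ py ≠ d ∧ py ≠ e ∧ py ≠ f := by
  obtain ⟨pu, hpu⟩ := card_pos.1 (by omega : 0 < Lu'.card)
  obtain ⟨pw, hpw⟩ := card_pos.1 (by omega : 0 < Lw'.card)
  obtain ⟨py, hpy⟩ := card_pos.1 (by omega : 0 < Ly'.card)
  -- Part `i` holds the `i`-th pair of opposite cycle edges, without the pendant colours they see.
  let L : Fin 3 × Bool → Finset ℕ := fun p => cond p.2
    (![Ld \ {pw, py}, Le \ {pu, py}, Lf \ {pu, py}] p.1)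
    (![La \ {pu, pw}, Lb \ {pu, pw}, Lc \ {pw, py}] p.1)
  have hL : ∀ p, Fintype.card (Fin 3) ≤ #(L p) := by
    rw [Fintype.card_fin]
    rintro ⟨i, _ | _⟩ <;> fin_cases i <;>
      exact le_trans (by omega) (le_card_sdiff_pair _ _ _)
  obtain ⟨col, hcol, hne⟩ := exists_cocktailParty_listColoring L hL
  have ha' : col (0, false) ∈ La \ {pu, pw} := hcol (0, false)
  have hb' : col (1, false) ∈ Lb \ {pu, pw} := hcol (1, false)
  have hc' : col (2, false) ∈ Lc \ {pw, py} := hcol (2, false)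
  have hd' : col (0, true) ∈ Ld \ {pw, py} := hcol (0, true)
  have he' : col (1, true) ∈ Le \ {pu, py} := hcol (1, true)
  have hf' : col (2, true) ∈ Lf \ {pu, py} := hcol (2, true)
  simp only [mem_sdiff, mem_insert, mem_singleton, not_or] at ha' hb' hc' hd' he' hf'
  refine ⟨pu, hpu, pw, hpw, py, hpy, _, ha'.1, _, hb'.1, _, hc'.1, _, hd'.1, _, he'.1, _, hf'.1,
    ?_⟩
  refine ⟨?_, ?_, ?_, ?_, ?_, ?_, ?_, ?_, ?_, ?_, ?_, ?_, ?_⟩ <;> try exact hne _ _ (by decide)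
  grind
end
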